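/- arXiv:2307.00889 — 10 statements merged into one kernel-verified Lean document; each statement's English description precedes it below -/
import Mathlib

section
/- Let σ ⊆ ℝⁿ be a strongly convex rational polyhedral cone generated by finitely many vectors of ℤⁿ. Then the additive monoid S_σ = σ ∩ ℤⁿ admits a finite Hilbert basis: S_σ is finitely generated, its set of irreducible elements is finite, and this set generates S_σ (it is the smallest generating set with respect to inclusion). -/
open scoped BigOperators

/-- The real-coordinate vector attached to an integer vector. -/
def toR {n : ℕ} (u : Fin n → ℤ) : Fin n → ℝ := fun j => (u j : ℝ)

/-- The rational polyhedral cone generated by integer vectors `v 0, …, v (r-1)`: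
all nonnegative real linear combinations of the generators. -/
def coneOf {n r : ℕ} (v : Fin r → (Fin n → ℤ)) : Set (Fin n → ℝ) :=
  { x | ∃ c : Fin r → ℝ, (∀ i, 0 ≤ c i) ∧ x = ∑ i, c i • toR (v i) }

/-- The lattice points of a subset of `ℝⁿ`: `S_σ = σ ∩ ℤⁿ`. -/
def latticePoints {n : ℕ} (σ : Set (Fin n → ℝ)) : Set (Fin n → ℤ) :=
  { u | toR u ∈ σ }

/-- `u` is an irreducible element of `S`: it is a nonzero element of `S` which cannot be
written as the sum of two nonzero elements of `S`. -/
def IsIrreducibleElt {n : ℕ} (S : Set (Fin n → ℤ)) (u : Fin n → ℤ) : Prop :=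
  u ∈ S ∧ u ≠ 0 ∧ ∀ a b : Fin n → ℤ, a ∈ S → b ∈ S → u = a + b → a = 0 ∨ b = 0

/-- The Hilbert basis of (the monoid of lattice points of) a cone:
the set of its irreducible elements. -/
def hilbertBasis {n : ℕ} (S : Set (Fin n → ℤ)) : Set (Fin n → ℤ) :=
  { u | IsIrreducibleElt S u }
/-!
Writing each coefficient of a lattice point `∑ cᵢ vᵢ` of `σ` as `⌊cᵢ⌋ + fract cᵢ` shows that `S_σ`
is generated by its finitely many points in the zonotope `∑ [0,1] vᵢ` (Gordan's lemma). Strong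
convexity means that `S_σ` has no nonzero units, so every element of an inclusion-minimal finite
generating set is irreducible; conversely, irreducible elements lie in every generating set.
Hence the Hilbert basis is exactly a minimal finite generating set.
-/

section Lattice

variable {n r : ℕ}

lemma toR_zero : toR (0 : Fin n → ℤ) = 0 := by
  funext j; simp [toR]

lemma toR_add (a b : Fin n → ℤ) : toR (a + b) = toR a + toR b := by
  funext j; simp [toR]

lemma toR_neg (a : Fin n → ℤ) : toR (-a) = -toR a := by
  funext j; simp [toR]

lemma toR_injective : Function.Injective (toR (n := n)) := fun _ _ h =>
  funext fun j => Int.cast_injective (congrFun h j)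

variable (v : Fin r → Fin n → ℤ)

def latticeSubmonoid : AddSubmonoid (Fin n → ℤ) where
  carrier := latticePoints (coneOf v)
  zero_mem' := ⟨0, fun _ => le_rfl, by simp [toR_zero]⟩
  add_mem' := by
    rintro a b ⟨c, hc, ha⟩ ⟨d, hd, hb⟩
    refine ⟨c + d, fun i => add_nonneg (hc i) (hd i), ?_⟩
    simp only [toR_add, ha, hb, Pi.add_apply, add_smul, Finset.sum_add_distrib]

def zonotope : Set (Fin n → ℝ) :=
  { x | ∃ c : Fin r → ℝ, (∀ i, c i ∈ Set.Icc 0 1) ∧ x = ∑ i, c i • toR (v i) }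

lemma finite_latticePoints_zonotope : (latticePoints (zonotope v)).Finite := by
  let B : Fin n → ℤ := fun j => ∑ i, |v i j|
  refine (Set.finite_Icc (-B) B).subset fun u ⟨c, hc, hu⟩ => ?_
  have hbound : ∀ j, |u j| ≤ B j := fun j => by
    have huj : (u j : ℝ) = ∑ i, c i * v i j := by simpa [toR] using congrFun hu j
    have : |(u j : ℝ)| ≤ B j := by
      rw [huj]
      push_cast [B]
      refine (Finset.abs_sum_le_sum_abs _ _).trans (Finset.sum_le_sum fun i _ => ?_)
      rw [abs_mul, abs_of_nonneg (hc i).1]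
      exact mul_le_of_le_one_left (abs_nonneg _) (hc i).2
    exact_mod_cast this
  exact ⟨fun j => neg_le_of_abs_le (hbound j), fun j => le_of_abs_le (hbound j)⟩

lemma closure_latticePoints_zonotope :
    AddSubmonoid.closure (latticePoints (zonotope v)) = latticeSubmonoid v := by
  refine le_antisymm (AddSubmonoid.closure_le.2 fun u ⟨c, hc, hu⟩ => ⟨c, fun i => (hc i).1, hu⟩) ?_
  rintro u ⟨c, hc, hu⟩
  have hgen : ∀ i, v i ∈ latticePoints (zonotope v) := fun i =>
    ⟨Pi.single i 1, fun k => by by_cases h : k = i <;> simp [h], by simp [Pi.single_apply]⟩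
  let k : Fin r → ℕ := fun i => ⌊c i⌋₊
  have hfract : u - ∑ i, k i • v i ∈ latticePoints (zonotope v) := by
    refine ⟨fun i => c i - k i, fun i => ⟨sub_nonneg.2 (Nat.floor_le (hc i)), ?_⟩, ?_⟩
    · linarith [Nat.lt_floor_add_one (c i)]
    · funext j
      have huj := congrFun hu j
      simp only [toR, Finset.sum_apply, Pi.smul_apply, smul_eq_mul] at huj
      simp [toR, Finset.sum_apply, sub_mul, huj]
  rw [← sub_add_cancel u (∑ i, k i • v i)]
  exact add_mem (AddSubmonoid.subset_closure hfract)
    (sum_mem fun i _ => nsmul_mem (AddSubmonoid.subset_closure (hgen i)) _)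

lemma eq_zero_of_add_eq_zero_of_mem_latticePoints
    (hsc : ∀ x : Fin n → ℝ, x ∈ coneOf v → -x ∈ coneOf v → x = 0)
    {a b : Fin n → ℤ} (ha : a ∈ latticePoints (coneOf v)) (hb : b ∈ latticePoints (coneOf v))
    (hab : a + b = 0) : a = 0 := by
  have hb' : toR b = -toR a := by rw [eq_neg_of_add_eq_zero_right hab, toR_neg]
  exact toR_injective (by rw [hsc _ ha (hb' ▸ hb), toR_zero])

end Lattice

lemma AddSubmonoid.mem_closure_or_eq_add_of_mem_closure_insert {M : Type*} [AddCommMonoid M]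
    {t x : M} {U : Set M} (hx : x ∈ closure (insert t U)) :
    x ∈ closure U ∨ ∃ y ∈ closure (insert t U), x = t + y := by
  rw [Set.insert_eq, closure_union, mem_sup] at hx
  obtain ⟨_, hy, z, hz, rfl⟩ := hx
  obtain ⟨k, rfl⟩ := mem_closure_singleton.1 hy
  cases k with
  | zero => exact .inl (by simpa using hz)
  | succ k =>
    refine .inr ⟨k • t + z, ?_, by rw [succ_nsmul', add_assoc]⟩
    rw [Set.insert_eq, closure_union]
    exact add_mem_sup (mem_closure_singleton.2 ⟨k, rfl⟩) hz

section HilbertBasis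

variable {n : ℕ} {S : Set (Fin n → ℤ)}

lemma hilbertBasis_subset_of_closure_eq {G : Set (Fin n → ℤ)}
    (hG : (AddSubmonoid.closure G : Set (Fin n → ℤ)) = S) : hilbertBasis S ⊆ G := by
  intro u hu
  have hGS : ∀ x ∈ AddSubmonoid.closure G, x ∈ S := fun x hx => hG ▸ hx
  have hmem : u ∈ AddSubmonoid.closure G := by rw [← SetLike.mem_coe, hG]; exact hu.1
  induction hmem using AddSubmonoid.closure_induction with
  | mem x hx => exact hx
  | zero => exact absurd rfl hu.2.1
  | add x y hx hy ihx ihy =>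
    rcases hu.2.2 x y (hGS x hx) (hGS y hy) rfl with rfl | rfl
    · rw [zero_add] at hu ⊢; exact ihy hu
    · rw [add_zero] at hu ⊢; exact ihx hu

lemma subset_hilbertBasis_of_minimal (hS : ∀ a ∈ S, ∀ b ∈ S, a + b = 0 → a = 0)
    {T : Finset (Fin n → ℤ)}
    (hT : Minimal (fun T : Finset (Fin n → ℤ) =>
      (AddSubmonoid.closure (T : Set (Fin n → ℤ)) : Set (Fin n → ℤ)) = S) T) :
    (T : Set (Fin n → ℤ)) ⊆ hilbertBasis S := by
  intro t ht
  set U : Set (Fin n → ℤ) := ↑(T.erase t)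
  have hTU : (T : Set (Fin n → ℤ)) = insert t U := by
    rw [← Finset.coe_insert, Finset.insert_erase ht]
  have hTS : ∀ x ∈ AddSubmonoid.closure (insert t U), x ∈ S := fun x hx => by
    rw [← hT.prop, hTU]; exact hx
  have ht_notMem : t ∉ AddSubmonoid.closure U := by
    intro h
    have hUT : AddSubmonoid.closure U = AddSubmonoid.closure (T : Set (Fin n → ℤ)) := by
      rw [hTU, Set.insert_eq, AddSubmonoid.closure_union,
        sup_eq_right.2 ((AddSubmonoid.closure_singleton_le_iff_mem _ _).2 h)]
    have hU : (AddSubmonoid.closure U : Set (Fin n → ℤ)) = S := hUT ▸ hT.prop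
    exact Finset.notMem_erase t T (hT.2 hU (T.erase_subset t) ht)
  refine ⟨hTS t (AddSubmonoid.subset_closure (Set.mem_insert t U)),
    fun h0 => ht_notMem (h0 ▸ zero_mem _), fun a b ha hb hab => ?_⟩
  rw [← hT.prop, hTU] at ha hb
  rcases AddSubmonoid.mem_closure_or_eq_add_of_mem_closure_insert ha with ha' | ⟨a', ha', rfl⟩
  · rcases AddSubmonoid.mem_closure_or_eq_add_of_mem_closure_insert hb with hb' | ⟨b', hb', rfl⟩
    · exact absurd (hab ▸ add_mem ha' hb') ht_notMem
    · refine .inl (hS a (hTS a ha) b' (hTS b' hb') ?_)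
      rw [add_left_comm] at hab
      exact left_eq_add.1 hab
  · refine .inr (hS b (hTS b hb) a' (hTS a' ha') ?_)
    rw [add_assoc, add_comm a'] at hab
    exact left_eq_add.1 hab

end HilbertBasis

/-- for a strongly convex rational polyhedral cone `σ ⊆ ℝⁿ` generated by
finitely many integer vectors, the additive monoid `S_σ = σ ∩ ℤⁿ` is finitely generated,
its set of irreducible elements (the Hilbert basis) is finite, it generates `S_σ`, and it is
the smallest generating set with respect to inclusion. -/
theorem hilbert_basis_finite_exists {n r : ℕ} (v : Fin r → (Fin n → ℤ))
    (hsc : ∀ x : Fin n → ℝ, x ∈ coneOf v → -x ∈ coneOf v → x = 0) :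
    (∃ T : Finset (Fin n → ℤ),
        (AddSubmonoid.closure (T : Set (Fin n → ℤ)) : Set (Fin n → ℤ))
          = latticePoints (coneOf v)) ∧
    (hilbertBasis (latticePoints (coneOf v))).Finite ∧
    (AddSubmonoid.closure (hilbertBasis (latticePoints (coneOf v))) : Set (Fin n → ℤ))
      = latticePoints (coneOf v) ∧
    (∀ G : Set (Fin n → ℤ),
        (AddSubmonoid.closure G : Set (Fin n → ℤ)) = latticePoints (coneOf v) →
        hilbertBasis (latticePoints (coneOf v)) ⊆ G) := by
  have hpos : ∀ a ∈ latticePoints (coneOf v), ∀ b ∈ latticePoints (coneOf v), a + b = 0 → a = 0 :=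
    fun a ha b hb => eq_zero_of_add_eq_zero_of_mem_latticePoints v hsc ha hb
  obtain ⟨T₀, hT₀⟩ : ∃ T₀ : Finset (Fin n → ℤ),
      (AddSubmonoid.closure (T₀ : Set (Fin n → ℤ)) : Set (Fin n → ℤ)) = latticePoints (coneOf v) :=
    ⟨(finite_latticePoints_zonotope v).toFinset, by
      rw [Set.Finite.coe_toFinset, closure_latticePoints_zonotope]; rfl⟩
  obtain ⟨T, -, hT⟩ := exists_minimal_le_of_wellFoundedLT (fun T : Finset (Fin n → ℤ) =>
    (AddSubmonoid.closure (T : Set (Fin n → ℤ)) : Set (Fin n → ℤ)) = latticePoints (coneOf v))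
    T₀ hT₀
  have hbasis : hilbertBasis (latticePoints (coneOf v)) = T :=
    (hilbertBasis_subset_of_closure_eq hT.prop).antisymm (subset_hilbertBasis_of_minimal hpos hT)
  exact ⟨⟨T₀, hT₀⟩, hbasis ▸ T.finite_toSet, hbasis ▸ hT.prop,
    fun G hG => hilbertBasis_subset_of_closure_eq hG⟩
end

section
/- Let σ = ⟨v₁,…,v_r⟩ ⊆ ℝⁿ be a strongly convex rational polyhedral cone with v₁,…,v_r ∈ ℤⁿ. Then every irreducible element of S_σ = σ ∩ ℤⁿ lies in the parallelepiped P_σ = { Σᵢ λᵢ vᵢ : 0 ≤ λᵢ ≤ 1 for all i }. In particular the Hilbert basis H_σ is contained in P_σ. -/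
open scoped BigOperators

/-- for a strongly convex rational polyhedral cone
`σ = ⟨v₁,…,v_r⟩ ⊆ ℝⁿ` with integer generators, every irreducible element of
`S_σ = σ ∩ ℤⁿ` (in particular every Hilbert basis element) lies in the parallelepiped
`P_σ = { Σᵢ λᵢ vᵢ : 0 ≤ λᵢ ≤ 1 }`. -/
theorem hilbert_basis_in_parallelepiped {n r : ℕ} (v : Fin r → (Fin n → ℤ))
    (hsc : ∀ x : Fin n → ℝ, x ∈ coneOf v → -x ∈ coneOf v → x = 0)
    (u : Fin n → ℤ) (hu : IsIrreducibleElt (latticePoints (coneOf v)) u) :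
    ∃ c : Fin r → ℝ, (∀ i, 0 ≤ c i ∧ c i ≤ 1) ∧ toR u = ∑ i, c i • toR (v i) := by
  obtain ⟨hmem, hne, hirr⟩ := hu
  obtain ⟨c, hc0, hcu⟩ := hmem
  have toR_zero : ∀ w : Fin n → ℤ, toR w = 0 ↔ w = 0 := by
    intro w
    constructor
    · intro h; funext j
      have := congrFun h j
      simpa [toR] using this
    · intro h; subst h; funext j; simp [toR]
  set c' : Fin r → ℝ := fun i => if toR (v i) = 0 then 0 else c i with hc'def
  have hsum : toR u = ∑ i, c' i • toR (v i) := by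
    rw [hcu]
    refine Finset.sum_congr rfl fun i _ => ?_
    by_cases h : toR (v i) = 0
    · simp [hc'def, h]
    · simp [hc'def, h]
  refine ⟨c', fun i => ⟨?_, ?_⟩, hsum⟩
  · by_cases h : toR (v i) = 0 <;> simp [hc'def, h, hc0 i]
  · by_contra hgt
    push_neg at hgt
    have hvne : toR (v i) ≠ 0 := by
      intro h
      simp [hc'def, h] at hgt
      linarith
    -- v i is in the cone (and hence in S)
    have hvmem : v i ∈ latticePoints (coneOf v) := by
      refine ⟨fun j => if j = i then 1 else 0, fun j => by positivity, ?_⟩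
      simp [ite_smul]
    -- u - v i is in the cone
    have husub : u - v i ∈ latticePoints (coneOf v) := by
      refine ⟨fun j => if j = i then c' i - 1 else c' j, fun j => ?_, ?_⟩
      · dsimp only
        by_cases h : j = i
        · subst h; rw [if_pos rfl]; linarith
        · rw [if_neg h]
          by_cases hv : toR (v j) = 0 <;> simp [hc'def, hv, hc0 j]
      · have hR : toR (u - v i) = toR u - toR (v i) := by
          funext j; simp [toR]
        rw [hR, hsum]
        have : ∀ j : Fin r, (if j = i then c' i - 1 else c' j) • toR (v j)
            = c' j • toR (v j) - (if j = i then (1:ℝ) else 0) • toR (v j) := by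
          intro j
          by_cases h : j = i
          · subst h; simp [sub_smul]
          · simp [h]
        simp only [this, Finset.sum_sub_distrib]
        congr 1
        simp [ite_smul]
    have := hirr (v i) (u - v i) hvmem husub (by ring)
    rcases this with h | h
    · exact hvne ((toR_zero (v i)).mpr h)
    · -- u = v i, derive contradiction via strong convexity
      have huv : toR u = toR (v i) := by
        have : u = v i := by
          have := sub_eq_zero.mp h; exact this
        rw [this]
      have hkey : (c' i - 1) • toR (v i) = -∑ j ∈ Finset.univ.erase i, c' j • toR (v j) := by
        have hsplit : c' i • toR (v i) + ∑ j ∈ Finset.univ.erase i, c' j • toR (v j)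
            = toR (v i) := by
          rw [Finset.add_sum_erase _ (fun j => c' j • toR (v j)) (Finset.mem_univ i),
            ← hsum, huv]
        have h2 : (c' i - 1) • toR (v i) + ∑ j ∈ Finset.univ.erase i, c' j • toR (v j) = 0 :=
          calc (c' i - 1) • toR (v i) + ∑ j ∈ Finset.univ.erase i, c' j • toR (v j)
              = (c' i • toR (v i) + ∑ j ∈ Finset.univ.erase i, c' j • toR (v j)) - toR (v i) := by
                rw [sub_smul, one_smul]; abel
            _ = 0 := by rw [hsplit, sub_self]
        exact eq_neg_of_add_eq_zero_left h2
      have hx1 : (c' i - 1) • toR (v i) ∈ coneOf v := by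
        refine ⟨fun j => if j = i then c' i - 1 else 0, fun j => ?_, ?_⟩
        · dsimp only
          by_cases h : j = i
          · subst h; rw [if_pos rfl]; linarith
          · simp [h]
        · simp [ite_smul]
      have hx2 : -((c' i - 1) • toR (v i)) ∈ coneOf v := by
        refine ⟨fun j => if j = i then 0 else c' j, fun j => ?_, ?_⟩
        · dsimp only
          by_cases h : j = i
          · simp [h]
          · rw [if_neg h]
            by_cases hv : toR (v j) = 0 <;> simp [hc'def, hv, hc0 j]
        · rw [hkey, neg_neg]
          rw [← Finset.add_sum_erase _ (fun j => (if j = i then (0:ℝ) else c' j) • toR (v j))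
            (Finset.mem_univ i)]
          rw [if_pos rfl, zero_smul, zero_add]
          refine Finset.sum_congr rfl fun j hj => ?_
          rw [if_neg (Finset.ne_of_mem_erase hj)]
      have hx0 := hsc _ hx1 hx2
      rcases smul_eq_zero.mp hx0 with h' | h'
      · linarith
      · exact hvne h'
end

section
/- For all integers n ≥ 2 and r ≥ 1, each of the following triples of vectors is a ℤ-basis of ℤ³ (the 3×3 matrix with these columns has determinant ±1): ((2,2n+3,2s+1),(1,n+1,s+1),(1,n+1,s)) for every 0 ≤ s ≤ r−1; ((2,2n+3,2s),(2,2n+3,2s+1),(1,n+1,s)) for every 0 ≤ s ≤ r−1; ((2,2n+3,2s),(2,2n+3,2s−1),(1,n+1,s)) for every 1 ≤ s ≤ r; and, for all integers k, l, m, the triples ((1,k,l),(1,k,l+1),(1,k+1,m)) and ((1,k,l),(1,k,l+1),(1,k−1,m)). Hence the simplicial cones generated by these triples, which subdivide the cone σ₂ = ⟨(1,0,0),(1,0,r),(2,2n+3,0),(2,2n+3,2r)⟩ of the dual Newton polyhedron of the B₍₂ᵣ₋₁,ₙ₎-singularity x^{2n+3}z − x^r y² − y²z = 0, are all regular. -/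
open scoped BigOperators

/-- The 3×3 integer matrix with columns `a, b, c`. -/
def colMat (a b c : Fin 3 → ℤ) : Matrix (Fin 3) (Fin 3) ℤ :=
  Matrix.of fun i j => ![a, b, c] j i

/-- The triple `(a, b, c)` is a `ℤ`-basis of `ℤ³`: the matrix with columns `a, b, c`
has determinant `±1`, i.e. the simplicial cone `⟨a, b, c⟩` is regular. -/
def IsUnimodular (a b c : Fin 3 → ℤ) : Prop :=
  (colMat a b c).det = 1 ∨ (colMat a b c).det = -1

/-- regularity of the triples subdividing the cone `σ₂` of the dual Newton
polyhedron of the `B₍₂ᵣ₋₁,ₙ₎`-singularity `x^{2n+3}z − x^r y² − y²z = 0`. -/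
theorem B_odd_sigma2_refinement_regular (n r : ℤ) (hn : 2 ≤ n) (hr : 1 ≤ r) :
    (∀ s : ℤ, 0 ≤ s → s ≤ r - 1 →
      IsUnimodular ![2, 2 * n + 3, 2 * s + 1] ![1, n + 1, s + 1] ![1, n + 1, s]) ∧
    (∀ s : ℤ, 0 ≤ s → s ≤ r - 1 →
      IsUnimodular ![2, 2 * n + 3, 2 * s] ![2, 2 * n + 3, 2 * s + 1] ![1, n + 1, s]) ∧
    (∀ s : ℤ, 1 ≤ s → s ≤ r →
      IsUnimodular ![2, 2 * n + 3, 2 * s] ![2, 2 * n + 3, 2 * s - 1] ![1, n + 1, s]) ∧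
    (∀ k l m : ℤ, IsUnimodular ![1, k, l] ![1, k, l + 1] ![1, k + 1, m]) ∧
    (∀ k l m : ℤ, IsUnimodular ![1, k, l] ![1, k, l + 1] ![1, k - 1, m]) := by
  refine ⟨fun s _ _ => ?_, fun s _ _ => ?_, fun s _ _ => ?_, fun k l m => ?_, fun k l m => ?_⟩ <;>
  · simp only [IsUnimodular, colMat, Matrix.det_fin_three, Matrix.of_apply, Matrix.cons_val',
      Matrix.cons_val_zero, Matrix.cons_val_one, Matrix.head_cons, Matrix.empty_val',
      Matrix.cons_val_fin_one, Matrix.cons_val_two, Matrix.tail_cons, Matrix.head_fin_const]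
    first
    | (refine Or.inl ?_; ring1)
    | (refine Or.inr ?_; ring1)
end

section
/- Let n ≥ 2 and r ≥ 1 be integers and let σ₂ = ⟨(1,0,0),(1,0,r),(2,2n+3,0),(2,2n+3,2r)⟩ ⊆ ℝ³ (a maximal cone of the dual Newton polyhedron of the B₍₂ᵣ₋₁,ₙ₎-singularity x^{2n+3}z − x^r y² − y²z = 0). Then the Hilbert basis of σ₂ is exactly { (1,y,z) ∈ ℤ³ : 0 ≤ y ≤ n+1, 0 ≤ z ≤ r } ∪ { (2,2n+3,j) : 0 ≤ j ≤ 2r }; that is, these vectors are precisely the irreducible elements of S_{σ₂} = σ₂ ∩ ℤ³, and they generate the monoid S_{σ₂}. -/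
open scoped BigOperators

def Q (n r : ℤ) (u : Fin 3 → ℤ) : Prop :=
  0 ≤ u 1 ∧ 0 ≤ u 2 ∧ 2 * u 1 ≤ (2*n+3) * u 0 ∧ u 2 ≤ r * u 0

def Bset (n r : ℤ) : Set (Fin 3 → ℤ) :=
  { u | u 0 = 1 ∧ 0 ≤ u 1 ∧ u 1 ≤ n + 1 ∧ 0 ≤ u 2 ∧ u 2 ≤ r } ∪
  { u | ∃ j : ℤ, 0 ≤ j ∧ j ≤ 2 * r ∧ u = ![2, 2 * n + 3, j] }

lemma mem_S_iff (n r : ℤ) (hn : 2 ≤ n) (hr : 1 ≤ r) (u : Fin 3 → ℤ) :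
    u ∈ latticePoints (coneOf ![![1, 0, 0], ![1, 0, r], ![2, 2 * n + 3, 0], ![2, 2 * n + 3, 2 * r]]) ↔ Q n r u := by
  have hN : (0:ℝ) < 2*(n:ℝ)+3 := by
    have : (2:ℝ) ≤ (n:ℝ) := by exact_mod_cast hn
    linarith
  have hR : (0:ℝ) < (r:ℝ) := by exact_mod_cast hr
  constructor
  · rintro ⟨c, hc, hx⟩
    have h0 := congrFun hx 0
    have h1 := congrFun hx 1
    have h2 := congrFun hx 2
    simp [toR, Fin.sum_univ_four, Matrix.cons_val_zero, Matrix.cons_val_one,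
      Matrix.head_cons, Matrix.cons_val_two, Matrix.cons_val_three,
      Matrix.tail_cons, Matrix.vecHead, Matrix.vecTail] at h0 h1 h2
    have hc0 := hc 0; have hc1 := hc 1; have hc2 := hc 2; have hc3 := hc 3
    push_cast at h0 h1 h2
    refine ⟨?_, ?_, ?_, ?_⟩
    · have : (0:ℝ) ≤ (u 1 : ℝ) := by
        rw [h1]; nlinarith [mul_nonneg hN.le hc2, mul_nonneg hN.le hc3]
      exact_mod_cast this
    · have : (0:ℝ) ≤ (u 2 : ℝ) := by
        rw [h2]; nlinarith [mul_nonneg hR.le hc1, mul_nonneg hR.le hc3]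
      exact_mod_cast this
    · have : (2:ℝ) * (u 1:ℝ) ≤ (2*(n:ℝ)+3) * (u 0:ℝ) := by
        rw [h0, h1]; nlinarith [mul_nonneg hN.le hc0, mul_nonneg hN.le hc1]
      exact_mod_cast this
    · have : (u 2:ℝ) ≤ (r:ℝ) * (u 0:ℝ) := by
        rw [h0, h2]; nlinarith [mul_nonneg hR.le hc0, mul_nonneg hR.le hc2]
      exact_mod_cast this
  · rintro ⟨h1, h2, h3, h4⟩
    have hY : (0:ℝ) ≤ (u 1:ℝ) := by exact_mod_cast h1
    have hZ : (0:ℝ) ≤ (u 2:ℝ) := by exact_mod_cast h2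
    have h3' : 2*(u 1:ℝ) ≤ (2*(n:ℝ)+3) * (u 0:ℝ) := by exact_mod_cast h3
    have h4' : (u 2:ℝ) ≤ (r:ℝ) * (u 0:ℝ) := by exact_mod_cast h4
    by_cases hcase : 2 * r * u 1 ≤ (2*n+3) * u 2
    · have hc' : 2*(r:ℝ)*(u 1:ℝ) ≤ (2*(n:ℝ)+3)*(u 2:ℝ) := by exact_mod_cast hcase
      refine ⟨![(u 0:ℝ) - (u 2:ℝ)/(r:ℝ), (u 2:ℝ)/(r:ℝ) - 2*(u 1:ℝ)/(2*(n:ℝ)+3), 0,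
        (u 1:ℝ)/(2*(n:ℝ)+3)], ?_, ?_⟩
      · intro i
        fin_cases i <;> simp
        · rw [div_le_iff₀ hR]; linarith
        · rw [div_le_div_iff₀ hN hR]; linarith
        · positivity
      · funext j
        fin_cases j <;>
          · simp [toR, Fin.sum_univ_four, Matrix.cons_val_zero, Matrix.cons_val_one,
              Matrix.head_cons, Matrix.cons_val_two, Matrix.cons_val_three,
              Matrix.tail_cons, Matrix.vecHead, Matrix.vecTail]
            push_cast
            field_simp
            try ring
    · push_neg at hcase
      have hc' : (2*(n:ℝ)+3)*(u 2:ℝ) < 2*(r:ℝ)*(u 1:ℝ) := by exact_mod_cast hcase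
      refine ⟨![(u 0:ℝ) - 2*(u 1:ℝ)/(2*(n:ℝ)+3), 0,
        (u 1:ℝ)/(2*(n:ℝ)+3) - (u 2:ℝ)/(2*(r:ℝ)), (u 2:ℝ)/(2*(r:ℝ))], ?_, ?_⟩
      · intro i
        fin_cases i <;> simp
        · rw [div_le_iff₀ hN]; linarith
        · rw [div_le_div_iff₀ (by linarith) hN]; linarith
        · positivity
      · funext j
        fin_cases j <;>
          · simp [toR, Fin.sum_univ_four, Matrix.cons_val_zero, Matrix.cons_val_one,
              Matrix.head_cons, Matrix.cons_val_two, Matrix.cons_val_three,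
              Matrix.tail_cons, Matrix.vecHead, Matrix.vecTail]
            push_cast
            field_simp
            try ring


lemma Q_x_nonneg (n r : ℤ) (hn : 2 ≤ n) (hr : 1 ≤ r) (u : Fin 3 → ℤ) (h : Q n r u) :
    0 ≤ u 0 := by
  obtain ⟨h1, h2, h3, h4⟩ := h
  nlinarith

lemma Q_zero_of_x_zero (n r : ℤ) (hn : 2 ≤ n) (hr : 1 ≤ r) (u : Fin 3 → ℤ)
    (h : Q n r u) (hx : u 0 = 0) : u = 0 := by
  obtain ⟨h1, h2, h3, h4⟩ := h
  rw [hx, mul_zero] at h3 h4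
  have hy : u 1 = 0 := by omega
  have hz : u 2 = 0 := by omega
  funext j
  fin_cases j <;> simp [hx, hy, hz]

lemma B_sub_Q (n r : ℤ) (hn : 2 ≤ n) (hr : 1 ≤ r) (u : Fin 3 → ℤ)
    (hu : u ∈ Bset n r) : Q n r u := by
  rcases hu with ⟨e0, e1, e2, e3, e4⟩ | ⟨j, hj0, hj2, rfl⟩
  · exact ⟨e1, e3, by rw [e0]; linarith, by rw [e0]; linarith⟩
  · refine ⟨by simp; linarith, by simpa using hj0, ?_, ?_⟩
    · simp; ring_nf; linarith
    · simp; linarith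

lemma B_ne_zero (n r : ℤ) (u : Fin 3 → ℤ) (hu : u ∈ Bset n r) : u ≠ 0 := by
  rcases hu with ⟨e0, _⟩ | ⟨j, _, _, rfl⟩
  · intro h; rw [h] at e0; simp at e0
  · intro h
    have := congrFun h 0
    simp at this

lemma split_lemma (n r : ℤ) (hn : 2 ≤ n) (hr : 1 ≤ r) (u : Fin 3 → ℤ) (hu : Q n r u)
    (hx : 2 ≤ u 0) (hne : ¬(u 0 = 2 ∧ u 1 = 2 * n + 3)) :
    ∃ b v, b ∈ Bset n r ∧ Q n r v ∧ 1 ≤ v 0 ∧ v 0 < u 0 ∧ u = b + v := by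
  obtain ⟨h1, h2, h3, h4⟩ := hu
  by_cases heq : 2 * u 1 = (2 * n + 3) * u 0
  · have hx3 : 3 ≤ u 0 := by
      rcases eq_or_lt_of_le hx with h | h
      · exfalso
        apply hne
        refine ⟨h.symm, ?_⟩
        rw [← h] at heq
        linarith
      · omega
    have hy : 2 * n + 3 ≤ u 1 := by nlinarith
    refine ⟨![2, 2 * n + 3, min (u 2) (2 * r)],
      ![u 0 - 2, u 1 - (2 * n + 3), u 2 - min (u 2) (2 * r)], ?_, ?_, ?_, ?_, ?_⟩
    · right
      exact ⟨min (u 2) (2 * r), le_min h2 (by linarith), min_le_right _ _, rfl⟩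
    · refine ⟨by simp; linarith, by simp [min_le_left], ?_, ?_⟩
      · simp only [Matrix.cons_val_zero, Matrix.cons_val_one, Matrix.head_cons]
        have hid : (2 * n + 3) * (u 0 - 2) = (2 * n + 3) * u 0 - 2 * (2 * n + 3) := by ring
        rw [hid]; linarith
      · simp only [Matrix.cons_val_zero, Matrix.cons_val_two, Matrix.tail_cons, Matrix.head_cons]
        have hid : r * (u 0 - 2) = r * u 0 - 2 * r := by ring
        rw [hid]
        rcases le_total (u 2) (2 * r) with h | h
        · rw [min_eq_left h]
          have : 0 ≤ r * u 0 - 2 * r := by nlinarith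
          linarith
        · rw [min_eq_right h]; linarith
    · simp only [Matrix.cons_val_zero]; omega
    · simp only [Matrix.cons_val_zero]; omega
    · funext jj
      fin_cases jj <;> simp <;> ring
  · have hlt : 2 * u 1 < (2 * n + 3) * u 0 := lt_of_le_of_ne h3 heq
    refine ⟨![1, min (u 1) (n + 1), min (u 2) r],
      ![u 0 - 1, u 1 - min (u 1) (n + 1), u 2 - min (u 2) r], ?_, ?_, ?_, ?_, ?_⟩
    · left
      exact ⟨rfl, le_min h1 (by linarith), min_le_right _ _, le_min h2 (by linarith),
        min_le_right _ _⟩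
    · refine ⟨by simp [min_le_left], by simp [min_le_left], ?_, ?_⟩
      · simp only [Matrix.cons_val_zero, Matrix.cons_val_one, Matrix.head_cons]
        have hid : (2 * n + 3) * (u 0 - 1) = (2 * n + 3) * u 0 - (2 * n + 3) := by ring
        rw [hid]
        rcases le_total (u 1) (n + 1) with h | h
        · rw [min_eq_left h]
          have : 0 ≤ (2 * n + 3) * u 0 - (2 * n + 3) := by nlinarith
          linarith
        · rw [min_eq_right h]; linarith
      · simp only [Matrix.cons_val_zero, Matrix.cons_val_two, Matrix.tail_cons, Matrix.head_cons]
        have hid : r * (u 0 - 1) = r * u 0 - r := by ring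
        rw [hid]
        rcases le_total (u 2) r with h | h
        · rw [min_eq_left h]
          have : 0 ≤ r * u 0 - r := by nlinarith
          linarith
        · rw [min_eq_right h]; linarith
    · simp only [Matrix.cons_val_zero]; omega
    · simp only [Matrix.cons_val_zero]; omega
    · funext jj
      fin_cases jj <;> simp <;> ring

lemma Q_mem_closure (n r : ℤ) (hn : 2 ≤ n) (hr : 1 ≤ r) :
    ∀ (k : ℕ) (u : Fin 3 → ℤ), (u 0).toNat = k → Q n r u →
      u ∈ AddSubmonoid.closure (Bset n r) := by
  intro k
  induction k using Nat.strong_induction_on with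
  | _ k ih =>
    intro u hk hu
    have hx0 : 0 ≤ u 0 := Q_x_nonneg n r hn hr u hu
    obtain ⟨h1, h2, h3, h4⟩ := hu
    by_cases hx : u 0 = 0
    · rw [Q_zero_of_x_zero n r hn hr u ⟨h1, h2, h3, h4⟩ hx]
      exact zero_mem _
    by_cases hx1 : u 0 = 1
    · apply AddSubmonoid.subset_closure
      left
      rw [hx1, mul_one] at h3 h4
      exact ⟨hx1, h1, by omega, h2, h4⟩
    by_cases hx2 : u 0 = 2 ∧ u 1 = 2 * n + 3
    · apply AddSubmonoid.subset_closure
      right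
      refine ⟨u 2, h2, by rw [hx2.1] at h4; linarith, ?_⟩
      funext j
      fin_cases j <;> simp [hx2.1, hx2.2]
    · have hx2' : 2 ≤ u 0 := by omega
      obtain ⟨b, v, hb, hv, hv1, hvlt, huv⟩ :=
        split_lemma n r hn hr u ⟨h1, h2, h3, h4⟩ hx2' hx2
      rw [huv]
      refine add_mem (AddSubmonoid.subset_closure hb) ?_
      exact ih (v 0).toNat (by omega) v rfl hv

def Qmonoid (n r : ℤ) : AddSubmonoid (Fin 3 → ℤ) where
  carrier := {u | Q n r u}
  zero_mem' := by simp [Q]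
  add_mem' := by
    rintro a b ⟨a1, a2, a3, a4⟩ ⟨b1, b2, b3, b4⟩
    refine ⟨?_, ?_, ?_, ?_⟩ <;> simp only [Pi.add_apply]
    · linarith
    · linarith
    · have : (2 * n + 3) * (a 0 + b 0) = (2 * n + 3) * a 0 + (2 * n + 3) * b 0 := by ring
      rw [this]; linarith
    · have : r * (a 0 + b 0) = r * a 0 + r * b 0 := by ring
      rw [this]; linarith

lemma closure_eq (n r : ℤ) (hn : 2 ≤ n) (hr : 1 ≤ r) :
    (AddSubmonoid.closure (Bset n r) : Set (Fin 3 → ℤ)) =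
      latticePoints (coneOf ![![1, 0, 0], ![1, 0, r], ![2, 2 * n + 3, 0], ![2, 2 * n + 3, 2 * r]]) := by
  apply Set.Subset.antisymm
  · intro x hx
    rw [mem_S_iff n r hn hr]
    have : AddSubmonoid.closure (Bset n r) ≤ Qmonoid n r := by
      rw [AddSubmonoid.closure_le]
      intro b hb
      exact B_sub_Q n r hn hr b hb
    exact this hx
  · intro u hu
    rw [mem_S_iff n r hn hr] at hu
    exact Q_mem_closure n r hn hr (u 0).toNat u rfl hu

lemma hb_eq (n r : ℤ) (hn : 2 ≤ n) (hr : 1 ≤ r) :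
    hilbertBasis (latticePoints (coneOf ![![1, 0, 0], ![1, 0, r], ![2, 2 * n + 3, 0], ![2, 2 * n + 3, 2 * r]])) = Bset n r := by
  ext u
  constructor
  · rintro ⟨huS, hune, hirr⟩
    rw [mem_S_iff n r hn hr] at huS
    obtain ⟨h1, h2, h3, h4⟩ := huS
    have hx0 : 0 ≤ u 0 := Q_x_nonneg n r hn hr u ⟨h1, h2, h3, h4⟩
    have hxne : u 0 ≠ 0 := fun h => hune (Q_zero_of_x_zero n r hn hr u ⟨h1, h2, h3, h4⟩ h)
    by_cases hx1 : u 0 = 1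
    · left
      rw [hx1, mul_one] at h3 h4
      exact ⟨hx1, h1, by omega, h2, h4⟩
    by_cases hx2 : u 0 = 2 ∧ u 1 = 2 * n + 3
    · right
      refine ⟨u 2, h2, by rw [hx2.1] at h4; linarith, ?_⟩
      funext j
      fin_cases j <;> simp [hx2.1, hx2.2]
    · exfalso
      have hx2' : 2 ≤ u 0 := by omega
      obtain ⟨b, v, hb, hv, hv1, hvlt, huv⟩ :=
        split_lemma n r hn hr u ⟨h1, h2, h3, h4⟩ hx2' hx2
      rcases hirr b v ((mem_S_iff n r hn hr b).mpr (B_sub_Q n r hn hr b hb))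
        ((mem_S_iff n r hn hr v).mpr hv) huv with h | h
      · exact B_ne_zero n r b hb h
      · rw [h] at hv1; simp at hv1
  · intro hb
    refine ⟨(mem_S_iff n r hn hr u).mpr (B_sub_Q n r hn hr u hb), B_ne_zero n r u hb, ?_⟩
    intro a c ha hc hace
    rw [mem_S_iff n r hn hr] at ha hc
    have ha0 : 0 ≤ a 0 := Q_x_nonneg n r hn hr a ha
    have hc0 : 0 ≤ c 0 := Q_x_nonneg n r hn hr c hc
    have hsum : u 0 = a 0 + c 0 := by rw [hace]; simp
    rcases hb with ⟨e0, _⟩ | ⟨j, hj0, hj2, rfl⟩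
    · rcases (by omega : a 0 = 0 ∨ c 0 = 0) with h | h
      · exact Or.inl (Q_zero_of_x_zero n r hn hr a ha h)
      · exact Or.inr (Q_zero_of_x_zero n r hn hr c hc h)
    · simp only [Matrix.cons_val_zero] at hsum
      by_cases haz : a 0 = 0
      · exact Or.inl (Q_zero_of_x_zero n r hn hr a ha haz)
      by_cases hcz : c 0 = 0
      · exact Or.inr (Q_zero_of_x_zero n r hn hr c hc hcz)
      exfalso
      have ha1 : a 0 = 1 := by omega
      have hc1 : c 0 = 1 := by omega
      have h3a := ha.2.2.1
      have h3c := hc.2.2.1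
      rw [ha1, mul_one] at h3a
      rw [hc1, mul_one] at h3c
      have hy : a 1 + c 1 = 2 * n + 3 := by
        have := congrFun hace 1
        simp at this
        omega
      have := ha.1
      have := hc.1
      omega


/-- the Hilbert basis of the cone
`σ₂ = ⟨(1,0,0),(1,0,r),(2,2n+3,0),(2,2n+3,2r)⟩` of the dual Newton polyhedron of the
`B₍₂ᵣ₋₁,ₙ₎`-singularity is exactly
`{(1,y,z) : 0 ≤ y ≤ n+1, 0 ≤ z ≤ r} ∪ {(2,2n+3,j) : 0 ≤ j ≤ 2r}`,
and these vectors generate the monoid `S_{σ₂} = σ₂ ∩ ℤ³`. -/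
theorem B_odd_sigma2_hilbert_basis (n r : ℤ) (hn : 2 ≤ n) (hr : 1 ≤ r) :
    let σ₂ := coneOf ![![1, 0, 0], ![1, 0, r], ![2, 2 * n + 3, 0], ![2, 2 * n + 3, 2 * r]]
    let S := latticePoints σ₂
    let B : Set (Fin 3 → ℤ) :=
      { u | u 0 = 1 ∧ 0 ≤ u 1 ∧ u 1 ≤ n + 1 ∧ 0 ≤ u 2 ∧ u 2 ≤ r } ∪
      { u | ∃ j : ℤ, 0 ≤ j ∧ j ≤ 2 * r ∧ u = ![2, 2 * n + 3, j] }
    hilbertBasis S = B ∧ (AddSubmonoid.closure B : Set (Fin 3 → ℤ)) = S := by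
  exact ⟨hb_eq n r hn hr, closure_eq n r hn hr⟩
end

section
/- Let n ≥ 2 and r ≥ 1 be integers and let σ₂ = ⟨(1,0,0),(1,0,n+r+2),(2,2n+3,0),(2,2n+3,2r+1)⟩ ⊆ ℝ³ (a maximal cone of the dual Newton polyhedron of the B₍₂ᵣ,ₙ₎-singularity x^{n+r+2}y − x^{2n+3}z + y²z = 0). Then the Hilbert basis of σ₂ is exactly { (1,y,z) ∈ ℤ³ : 0 ≤ y ≤ n+1, 0 ≤ z ≤ n+r+2−y } ∪ { (2,2n+3,j) : 0 ≤ j ≤ 2r+1 }; that is, these vectors are precisely the irreducible elements of S_{σ₂} = σ₂ ∩ ℤ³, and they generate the monoid S_{σ₂}. -/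
open scoped BigOperators

/-!
The cone `σ₂` is cut out by `y ≥ 0`, `z ≥ 0`, `2y ≤ (2n+3)x` and `y + z ≤ (n+r+2)x`, so `x` is a
grading of `S_{σ₂}` in which only `0` has degree `0`. Elements of degree one are then irreducible,
and so is `(2, 2n+3, j)`: a point `(1, y, z)` of `S_{σ₂}` has `y ≤ n + 1`, so two of them never
add up to `y = 2n+3`. Conversely, every nonzero `u ∈ S_{σ₂}` has a basis element `a` with
`u - a ∈ S_{σ₂}`: off the facet `2y = (2n+3)x` one peels off a point `(1, y', z')`, on it `x` is
even and one peels off a point `(2, 2n+3, j)`. Induction on `x` gives generation, and for an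
irreducible `u` it forces `u = a`.
-/

def sigma2Cone (n r : ℤ) : Set (Fin 3 → ℝ) :=
  coneOf ![![1, 0, 0], ![1, 0, n + r + 2], ![2, 2 * n + 3, 0], ![2, 2 * n + 3, 2 * r + 1]]

def sigma2Points (n r : ℤ) : AddSubmonoid (Fin 3 → ℤ) where
  carrier := {u | 0 ≤ u 1 ∧ 0 ≤ u 2 ∧ 2 * u 1 ≤ (2 * n + 3) * u 0 ∧
    u 1 + u 2 ≤ (n + r + 2) * u 0}
  zero_mem' := by simp
  add_mem' := by
    rintro a b ⟨ha1, ha2, ha3, ha4⟩ ⟨hb1, hb2, hb3, hb4⟩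
    simp only [Set.mem_ofPred_eq, Pi.add_apply]
    refine ⟨by linarith, by linarith, by linarith, by linarith⟩

lemma mem_sigma2Points {n r : ℤ} {u : Fin 3 → ℤ} :
    u ∈ sigma2Points n r ↔ 0 ≤ u 1 ∧ 0 ≤ u 2 ∧ 2 * u 1 ≤ (2 * n + 3) * u 0 ∧
      u 1 + u 2 ≤ (n + r + 2) * u 0 :=
  Iff.rfl

lemma toR_mem_sigma2Cone_iff_exists_coeffs {n r : ℤ} {u : Fin 3 → ℤ} :
    toR u ∈ sigma2Cone n r ↔ ∃ c : Fin 4 → ℝ, (∀ i, 0 ≤ c i) ∧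
      (u 0 : ℝ) = c 0 + c 1 + 2 * c 2 + 2 * c 3 ∧
      (u 1 : ℝ) = (2 * n + 3) * (c 2 + c 3) ∧
      (u 2 : ℝ) = (n + r + 2) * c 1 + (2 * r + 1) * c 3 := by
  simp only [sigma2Cone, coneOf, Set.mem_ofPred_eq, funext_iff, Fin.forall_fin_succ,
    Fin.succ_zero_eq_one, Fin.succ_one_eq_two, IsEmpty.forall_iff, and_true, Fin.sum_univ_four,
    Pi.add_apply, Pi.smul_apply, smul_eq_mul, toR, Matrix.cons_val, Int.cast_add, Int.cast_mul,
    Int.cast_ofNat, Int.cast_one, Int.cast_zero]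
  refine exists_congr fun c => and_congr_right fun _ => ?_
  ring_nf

lemma le_of_exists_coeffs {M m R x y z : ℝ} (hM : 0 ≤ M) (hm : 0 ≤ m) (hR : 0 ≤ R)
    (hMR : 2 * m = M + R) (h : ∃ c : Fin 4 → ℝ, (∀ i, 0 ≤ c i) ∧
      x = c 0 + c 1 + 2 * c 2 + 2 * c 3 ∧ y = M * (c 2 + c 3) ∧ z = m * c 1 + R * c 3) :
    0 ≤ y ∧ 0 ≤ z ∧ 2 * y ≤ M * x ∧ y + z ≤ m * x := by
  obtain ⟨c, hc, rfl, rfl, rfl⟩ := h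
  have hc0 := hc 0; have hc1 := hc 1; have hc2 := hc 2; have hc3 := hc 3
  refine ⟨by positivity, by positivity, ?_, ?_⟩
  · linarith [mul_nonneg hM (add_nonneg hc0 hc1)]
  · nlinarith [mul_nonneg hm hc0, mul_nonneg hR hc2]

lemma exists_coeffs_of_le {M m R x y z : ℝ} (hM : 0 < M) (hm : 0 < m) (hR : 0 < R)
    (hMR : 2 * m = M + R) (hy : 0 ≤ y) (hz : 0 ≤ z) (hyx : 2 * y ≤ M * x)
    (hyzx : y + z ≤ m * x) : ∃ c : Fin 4 → ℝ, (∀ i, 0 ≤ c i) ∧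
      x = c 0 + c 1 + 2 * c 2 + 2 * c 3 ∧ y = M * (c 2 + c 3) ∧ z = m * c 1 + R * c 3 := by
  -- The plane `R y = M z` through the rays `(1, 0, 0)` and `(2, M, R)` triangulates the cone.
  rcases le_total (R * y) (M * z) with h | h
  · refine ⟨![(m * x - y - z) / m, (M * z - R * y) / (M * m), 0, y / M], ?_, ?_, ?_, ?_⟩
    · intro i
      fin_cases i <;>
        simp only [Fin.zero_eta, Fin.mk_one, Fin.reduceFinMk, Fin.isValue, Matrix.cons_val,
          le_refl] <;>
        apply div_nonneg <;> nlinarith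
    · simp only [Matrix.cons_val]
      field_simp
      linear_combination -y * hMR
    all_goals (simp only [Matrix.cons_val]; field_simp; ring)
  · refine ⟨![(M * x - 2 * y) / M, 0, (R * y - M * z) / (M * R), z / R], ?_, ?_, ?_, ?_⟩
    · intro i
      fin_cases i <;>
        simp only [Fin.zero_eta, Fin.mk_one, Fin.reduceFinMk, Fin.isValue, Matrix.cons_val,
          le_refl] <;>
        apply div_nonneg <;> nlinarith
    all_goals (simp only [Matrix.cons_val]; field_simp; ring)

lemma toR_mem_sigma2Cone_iff {n r : ℤ} (hn : -1 ≤ n) (hr : 0 ≤ r) {u : Fin 3 → ℤ} :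
    toR u ∈ sigma2Cone n r ↔ u ∈ sigma2Points n r := by
  have hM : (0 : ℝ) < 2 * n + 3 := by exact_mod_cast (by omega : (0 : ℤ) < 2 * n + 3)
  have hm : (0 : ℝ) < n + r + 2 := by exact_mod_cast (by omega : (0 : ℤ) < n + r + 2)
  have hR : (0 : ℝ) < 2 * r + 1 := by exact_mod_cast (by omega : (0 : ℤ) < 2 * r + 1)
  have hMR : 2 * ((n : ℝ) + r + 2) = 2 * n + 3 + (2 * r + 1) := by ring
  have hcast : u ∈ sigma2Points n r ↔ (0 : ℝ) ≤ u 1 ∧ (0 : ℝ) ≤ u 2 ∧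
      2 * (u 1 : ℝ) ≤ (2 * n + 3) * u 0 ∧ (u 1 : ℝ) + u 2 ≤ (n + r + 2) * u 0 := by
    rw [mem_sigma2Points]; norm_cast
  rw [toR_mem_sigma2Cone_iff_exists_coeffs, hcast]
  exact ⟨le_of_exists_coeffs hM.le hm.le hR.le hMR,
    fun ⟨hy, hz, hyx, hyzx⟩ => exists_coeffs_of_le hM hm hR hMR hy hz hyx hyzx⟩

lemma latticePoints_sigma2Cone {n r : ℤ} (hn : -1 ≤ n) (hr : 0 ≤ r) :
    latticePoints (sigma2Cone n r) = sigma2Points n r :=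
  Set.ext fun _ => toR_mem_sigma2Cone_iff hn hr

def sigma2Basis (n r : ℤ) : Set (Fin 3 → ℤ) :=
  { u | u 0 = 1 ∧ 0 ≤ u 1 ∧ u 1 ≤ n + 1 ∧ 0 ≤ u 2 ∧ u 2 ≤ n + r + 2 - u 1 } ∪
  { u | ∃ j : ℤ, 0 ≤ j ∧ j ≤ 2 * r + 1 ∧ u = ![2, 2 * n + 3, j] }

lemma coord_zero_pos_of_mem_sigma2Basis {n r : ℤ} {a : Fin 3 → ℤ} (ha : a ∈ sigma2Basis n r) :
    0 < a 0 := by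
  rcases ha with ⟨ha0, -⟩ | ⟨j, -, -, rfl⟩
  · rw [ha0]; exact one_pos
  · simp

lemma sigma2Basis_subset {n r : ℤ} (hn : -1 ≤ n) : sigma2Basis n r ⊆ sigma2Points n r := by
  rintro u (⟨h0, hy, hyn, hz, hzy⟩ | ⟨j, hj, hjr, rfl⟩) <;>
    rw [SetLike.mem_coe, mem_sigma2Points]
  · rw [h0]; omega
  · simp; omega

lemma coord_zero_nonneg_of_mem_sigma2Points {n r : ℤ} (hn : -1 ≤ n) {u : Fin 3 → ℤ}
    (hu : u ∈ sigma2Points n r) : 0 ≤ u 0 := by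
  obtain ⟨hy, -, hyx, -⟩ := mem_sigma2Points.mp hu
  nlinarith

lemma eq_zero_of_mem_sigma2Points {n r : ℤ} {u : Fin 3 → ℤ} (hu : u ∈ sigma2Points n r)
    (h0 : u 0 = 0) : u = 0 := by
  obtain ⟨hy, hz, -, hyz⟩ := mem_sigma2Points.mp hu
  rw [h0, mul_zero] at hyz
  ext i
  fin_cases i <;> simp only [Fin.zero_eta, Fin.mk_one, Fin.reduceFinMk, Fin.isValue,
    Pi.zero_apply, h0] <;> omega

lemma one_le_coord_zero_of_mem_sigma2Points {n r : ℤ} (hn : -1 ≤ n) {u : Fin 3 → ℤ}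
    (hu : u ∈ sigma2Points n r) (hu0 : u ≠ 0) : 1 ≤ u 0 := by
  have := coord_zero_nonneg_of_mem_sigma2Points hn hu
  have := mt (eq_zero_of_mem_sigma2Points hu) hu0
  omega

lemma exists_sub_mem_of_lt {n r : ℤ} (hn : -1 ≤ n) (hr : 0 ≤ r) {u : Fin 3 → ℤ}
    (hu : u ∈ sigma2Points n r) (hx : 1 ≤ u 0) (hlt : 2 * u 1 < (2 * n + 3) * u 0) :
    ∃ a ∈ sigma2Basis n r, u - a ∈ sigma2Points n r := by
  obtain ⟨hy, hz, -, hyz⟩ := mem_sigma2Points.mp hu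
  have hM : 0 ≤ (2 * n + 3) * (u 0 - 1) := mul_nonneg (by omega) (by omega)
  have hR : 0 ≤ (2 * r + 1) * (u 0 - 1) := mul_nonneg (by omega) (by omega)
  -- Take `y₁` as large and `z₁` as small as the remainder allows.
  obtain ⟨y₁, hy₁, hy₁y, hy₁n⟩ : ∃ y₁, (y₁ = u 1 ∨ y₁ = n + 1) ∧ y₁ ≤ u 1 ∧ y₁ ≤ n + 1 :=
    ⟨min (u 1) (n + 1), min_choice _ _, min_le_left _ _, min_le_right _ _⟩
  obtain ⟨z₁, hz₁, hz₁0, hz₁z⟩ : ∃ z₁, (z₁ = 0 ∨ z₁ = u 1 + u 2 - y₁ - (n + r + 2) * (u 0 - 1)) ∧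
      0 ≤ z₁ ∧ u 1 + u 2 - y₁ - (n + r + 2) * (u 0 - 1) ≤ z₁ :=
    ⟨max 0 _, max_choice _ _, le_max_left _ _, le_max_right _ _⟩
  refine ⟨![1, y₁, z₁], Or.inl ⟨rfl, ?_, hy₁n, hz₁0, ?_⟩, ?_⟩
  · show 0 ≤ y₁
    omega
  · show z₁ ≤ n + r + 2 - y₁
    rcases hz₁ with rfl | rfl <;> linarith
  · simp only [mem_sigma2Points, Pi.sub_apply, Matrix.cons_val]
    refine ⟨by omega, ?_, ?_, by linarith⟩
    · rcases hz₁ with rfl | rfl <;> rcases hy₁ with rfl | rfl <;> linarith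
    · rcases hy₁ with rfl | rfl <;> linarith

lemma exists_sub_mem_of_eq {n r : ℤ} (hn : -1 ≤ n) (hr : 0 ≤ r) {u : Fin 3 → ℤ}
    (hu : u ∈ sigma2Points n r) (hx : 1 ≤ u 0) (heq : 2 * u 1 = (2 * n + 3) * u 0) :
    ∃ a ∈ sigma2Basis n r, u - a ∈ sigma2Points n r := by
  obtain ⟨hy, hz, -, hyz⟩ := mem_sigma2Points.mp hu
  have hx2 : 2 ≤ u 0 := by
    by_contra! h
    rw [show u 0 = 1 by omega] at heq
    omega
  have hM : 0 ≤ (2 * n + 3) * (u 0 - 2) := mul_nonneg (by omega) (by omega)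
  have hR : 0 ≤ (2 * r + 1) * (u 0 - 2) := mul_nonneg (by omega) (by omega)
  obtain ⟨j, hj, hj0, hjz⟩ : ∃ j, (j = 0 ∨ j = u 1 + u 2 - (n + r + 2) * u 0 + (2 * r + 1)) ∧
      0 ≤ j ∧ u 1 + u 2 - (n + r + 2) * u 0 + (2 * r + 1) ≤ j :=
    ⟨max 0 _, max_choice _ _, le_max_left _ _, le_max_right _ _⟩
  refine ⟨![2, 2 * n + 3, j], Or.inr ⟨j, hj0, by rcases hj with rfl | rfl <;> linarith, rfl⟩, ?_⟩
  simp only [mem_sigma2Points, Pi.sub_apply, Matrix.cons_val]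
  refine ⟨by linarith, by rcases hj with rfl | rfl <;> linarith, by linarith, by linarith⟩

lemma exists_sigma2Basis_sub_mem {n r : ℤ} (hn : -1 ≤ n) (hr : 0 ≤ r) {u : Fin 3 → ℤ}
    (hu : u ∈ sigma2Points n r) (hu0 : u ≠ 0) :
    ∃ a ∈ sigma2Basis n r, u - a ∈ sigma2Points n r := by
  have hx := one_le_coord_zero_of_mem_sigma2Points hn hu hu0
  rcases (mem_sigma2Points.mp hu).2.2.1.lt_or_eq with hlt | heq
  · exact exists_sub_mem_of_lt hn hr hu hx hlt
  · exact exists_sub_mem_of_eq hn hr hu hx heq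

lemma closure_sigma2Basis {n r : ℤ} (hn : -1 ≤ n) (hr : 0 ≤ r) :
    AddSubmonoid.closure (sigma2Basis n r) = sigma2Points n r := by
  refine le_antisymm (AddSubmonoid.closure_le.mpr (sigma2Basis_subset hn)) fun u hu => ?_
  induction hk : (u 0).toNat using Nat.strong_induction_on generalizing u with
  | _ k ih =>
    rcases eq_or_ne u 0 with rfl | hu0
    · exact zero_mem _
    obtain ⟨a, ha, hua⟩ := exists_sigma2Basis_sub_mem hn hr hu hu0
    have hlt : ((u - a) 0).toNat < k := by
      have := coord_zero_pos_of_mem_sigma2Basis ha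
      have := coord_zero_nonneg_of_mem_sigma2Points hn hua
      simp only [Pi.sub_apply] at *
      omega
    rw [← add_sub_cancel a u]
    exact add_mem (AddSubmonoid.subset_closure ha) (ih _ hlt (u - a) hua rfl)

lemma isIrreducibleElt_of_mem_sigma2Basis {n r : ℤ} (hn : -1 ≤ n) {u : Fin 3 → ℤ}
    (hu : u ∈ sigma2Basis n r) : IsIrreducibleElt (sigma2Points n r) u := by
  refine ⟨sigma2Basis_subset hn hu, ?_, fun a b ha hb hab => ?_⟩
  · rintro rfl
    simpa using coord_zero_pos_of_mem_sigma2Basis hu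
  by_contra! hab0
  have ha0 := one_le_coord_zero_of_mem_sigma2Points hn ha hab0.1
  have hb0 := one_le_coord_zero_of_mem_sigma2Points hn hb hab0.2
  have hx := congrFun hab 0
  simp only [Pi.add_apply] at hx
  rcases hu with ⟨hu0, -⟩ | ⟨j, -, -, rfl⟩
  · omega
  · have hy := congrFun hab 1
    simp only [Pi.add_apply, Matrix.cons_val] at hx hy
    have hay := (mem_sigma2Points.mp ha).2.2.1
    have hby := (mem_sigma2Points.mp hb).2.2.1
    rw [show a 0 = 1 by omega, mul_one] at hay
    rw [show b 0 = 1 by omega, mul_one] at hby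
    omega

lemma hilbertBasis_sigma2Points {n r : ℤ} (hn : -1 ≤ n) (hr : 0 ≤ r) :
    hilbertBasis (sigma2Points n r : Set (Fin 3 → ℤ)) = sigma2Basis n r := by
  refine Set.Subset.antisymm (fun u ⟨hu, hu0, hirr⟩ => ?_)
    fun _ hu => isIrreducibleElt_of_mem_sigma2Basis hn hu
  obtain ⟨a, ha, hua⟩ := exists_sigma2Basis_sub_mem hn hr hu hu0
  rcases hirr a (u - a) (sigma2Basis_subset hn ha) hua (add_sub_cancel a u).symm with h | h
  · exact absurd (coord_zero_pos_of_mem_sigma2Basis ha) (by simp [h])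
  · rwa [sub_eq_zero.mp h]

/-- the Hilbert basis of the cone
`σ₂ = ⟨(1,0,0),(1,0,n+r+2),(2,2n+3,0),(2,2n+3,2r+1)⟩` of the dual Newton polyhedron of
the `B₍₂ᵣ,ₙ₎`-singularity is exactly
`{(1,y,z) : 0 ≤ y ≤ n+1, 0 ≤ z ≤ n+r+2−y} ∪ {(2,2n+3,j) : 0 ≤ j ≤ 2r+1}`,
and these vectors generate the monoid `S_{σ₂} = σ₂ ∩ ℤ³`. -/
theorem B_even_sigma2_hilbert_basis (n r : ℤ) (hn : 2 ≤ n) (hr : 1 ≤ r) :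
    let σ₂ := coneOf
      ![![1, 0, 0], ![1, 0, n + r + 2], ![2, 2 * n + 3, 0], ![2, 2 * n + 3, 2 * r + 1]]
    let S := latticePoints σ₂
    let B : Set (Fin 3 → ℤ) :=
      { u | u 0 = 1 ∧ 0 ≤ u 1 ∧ u 1 ≤ n + 1 ∧ 0 ≤ u 2 ∧ u 2 ≤ n + r + 2 - u 1 } ∪
      { u | ∃ j : ℤ, 0 ≤ j ∧ j ≤ 2 * r + 1 ∧ u = ![2, 2 * n + 3, j] }
    hilbertBasis S = B ∧ (AddSubmonoid.closure B : Set (Fin 3 → ℤ)) = S := by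
  intro σ₂ S B
  have hn' : -1 ≤ n := by omega
  have hr' : 0 ≤ r := by omega
  have hS : S = sigma2Points n r := latticePoints_sigma2Cone hn' hr'
  have hB : B = sigma2Basis n r := rfl
  rw [hS, hB, closure_sigma2Basis hn' hr']
  exact ⟨hilbertBasis_sigma2Points hn' hr', rfl⟩
end

section
/- Let n ≥ 2 and r ≥ 1 be integers and let σ₃ = ⟨(0,1,0),(0,1,1),(2,2n+3,0),(2,2n+3,2r+1)⟩ ⊆ ℝ³ (a maximal cone of the dual Newton polyhedron of the B₍₂ᵣ,ₙ₎-singularity x^{n+r+2}y − x^{2n+3}z + y²z = 0). Then the Hilbert basis of σ₃ is exactly { (0,1,0), (0,1,1) } ∪ { (1,n+2,j) : 0 ≤ j ≤ r+1 } ∪ { (2,2n+3,j) : 0 ≤ j ≤ 2r+1 }. Moreover, the linear form l(x,y,z) = y − (n+1)x takes the value 1 on each generator of σ₃ and takes the value 1 on every element of this Hilbert basis. -/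
open scoped BigOperators

def inS (n r : ℤ) (u : Fin 3 → ℤ) : Prop :=
  0 ≤ u 0 ∧ 0 ≤ u 2 ∧ (2*n+3)*u 0 ≤ 2*u 1 ∧ u 2 ≤ u 1 + (r - n - 1)*u 0

lemma memS_iff (n r : ℤ) (hr : 1 ≤ r) (u : Fin 3 → ℤ) :
    u ∈ latticePoints (coneOf ![![0, 1, 0], ![0, 1, 1], ![2, 2 * n + 3, 0], ![2, 2 * n + 3, 2 * r + 1]]) ↔
    (0 ≤ u 0 ∧ 0 ≤ u 2 ∧ (2*n+3)*u 0 ≤ 2*u 1 ∧ u 2 ≤ u 1 + (r - n - 1)*u 0) := by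
  constructor
  · rintro ⟨c, hc, hx⟩
    have h0 := congrFun hx 0
    have h1 := congrFun hx 1
    have h2 := congrFun hx 2
    simp [Fin.sum_univ_four, toR, Matrix.vecHead, Matrix.vecTail] at h0 h1 h2
    have hc0 := hc 0; have hc1 := hc 1; have hc2 := hc 2; have hc3 := hc 3
    have hrR : (0:ℝ) ≤ (r:ℝ) := by exact_mod_cast (by linarith : (0:ℤ) ≤ r)
    refine ⟨?_, ?_, ?_, ?_⟩ <;>
      rw [show ∀ a b : ℤ, (a ≤ b) ↔ ((a:ℝ) ≤ (b:ℝ)) from fun a b => by exact_mod_cast Iff.rfl] <;>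
      push_cast <;> simp only [h0, h1, h2] <;>
      nlinarith [mul_nonneg hrR hc2, mul_nonneg hrR hc3]
  · rintro ⟨h0, h2, h3, h4⟩
    have h0R : (0:ℝ) ≤ (u 0 : ℝ) := by exact_mod_cast h0
    have h2R : (0:ℝ) ≤ (u 2 : ℝ) := by exact_mod_cast h2
    have h3R : (2*(n:ℝ)+3)*(u 0:ℝ) ≤ 2*(u 1:ℝ) := by exact_mod_cast h3
    have h4R : (u 2:ℝ) ≤ (u 1:ℝ) + ((r:ℝ) - n - 1)*(u 0:ℝ) := by exact_mod_cast h4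
    have hrR : (1:ℝ) ≤ (r:ℝ) := by exact_mod_cast hr
    have hden : (0:ℝ) < 2*(r:ℝ)+1 := by linarith
    rcases le_or_gt (2*(u 2:ℝ)) ((2*(r:ℝ)+1)*(u 0:ℝ)) with hcase | hcase
    · refine ⟨![(u 1:ℝ) - (2*(n:ℝ)+3)*(u 0:ℝ)/2, 0, (u 0:ℝ)/2 - (u 2:ℝ)/(2*(r:ℝ)+1), (u 2:ℝ)/(2*(r:ℝ)+1)], ?_, ?_⟩
      · intro i
        fin_cases i <;> simp
        · linarith
        · rw [div_le_div_iff₀ hden (by norm_num : (0:ℝ) < 2)]; linarith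
        · positivity
      · funext j
        fin_cases j <;>
          simp [Fin.sum_univ_four, toR, Matrix.vecHead, Matrix.vecTail] <;> push_cast <;> field_simp <;> ring
    · refine ⟨![(u 1:ℝ) - (u 2:ℝ) + ((r:ℝ) - n - 1)*(u 0:ℝ), (u 2:ℝ) - (2*(r:ℝ)+1)*(u 0:ℝ)/2, 0, (u 0:ℝ)/2], ?_, ?_⟩
      · intro i
        fin_cases i <;> simp
        · linarith
        · linarith
        · linarith
      · funext j
        fin_cases j <;>
          simp [Fin.sum_univ_four, toR, Matrix.vecHead, Matrix.vecTail] <;> push_cast <;> field_simp <;> ring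

lemma l_nonneg (n r : ℤ) (u : Fin 3 → ℤ) (h : inS n r u) : 0 ≤ u 1 - (n+1)*u 0 := by
  obtain ⟨h0, h2, h3, h4⟩ := h; linarith

lemma l_zero (n r : ℤ) (u : Fin 3 → ℤ) (h : inS n r u)
    (hl : u 1 - (n+1)*u 0 = 0) : u = 0 := by
  obtain ⟨h0, h2, h3, h4⟩ := h
  have hx : u 0 = 0 := by linarith
  rw [hx, mul_zero, sub_zero] at hl
  rw [hx, mul_zero] at h3 h4
  have hz : u 2 = 0 := by linarith
  funext i; fin_cases i <;> simp [hx, hl, hz]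

lemma l_add (n : ℤ) (a b : Fin 3 → ℤ) :
    (a + b) 1 - (n+1)*(a + b) 0 = (a 1 - (n+1)*a 0) + (b 1 - (n+1)*b 0) := by
  simp [Pi.add_apply]; ring


/-- the Hilbert basis of the cone
`σ₃ = ⟨(0,1,0),(0,1,1),(2,2n+3,0),(2,2n+3,2r+1)⟩` of the dual Newton polyhedron of the
`B₍₂ᵣ,ₙ₎`-singularity is exactly
`{(0,1,0),(0,1,1)} ∪ {(1,n+2,j) : 0 ≤ j ≤ r+1} ∪ {(2,2n+3,j) : 0 ≤ j ≤ 2r+1}`,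
and the linear form `l(x,y,z) = y − (n+1)x` takes value `1` on each generator of `σ₃`
and on each element of this Hilbert basis. -/
theorem B_even_sigma3_hilbert_basis (n r : ℤ) (hn : 2 ≤ n) (hr : 1 ≤ r) :
    let g : Fin 4 → (Fin 3 → ℤ) :=
      ![![0, 1, 0], ![0, 1, 1], ![2, 2 * n + 3, 0], ![2, 2 * n + 3, 2 * r + 1]]
    let S := latticePoints (coneOf g)
    let B : Set (Fin 3 → ℤ) :=
      ({![0, 1, 0], ![0, 1, 1]} : Set (Fin 3 → ℤ)) ∪
      { u | ∃ j : ℤ, 0 ≤ j ∧ j ≤ r + 1 ∧ u = ![1, n + 2, j] } ∪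
      { u | ∃ j : ℤ, 0 ≤ j ∧ j ≤ 2 * r + 1 ∧ u = ![2, 2 * n + 3, j] }
    hilbertBasis S = B ∧
    (∀ i : Fin 4, g i 1 - (n + 1) * g i 0 = 1) ∧
    (∀ u ∈ B, u 1 - (n + 1) * u 0 = 1) := by
  intro g S B
  -- membership criterion
  have hSmem : ∀ u : Fin 3 → ℤ, u ∈ S ↔ inS n r u := by
    intro u; exact memS_iff n r hr u
  -- every element of B is in inS and has l = 1
  have hBprop : ∀ u ∈ B, inS n r u ∧ u 1 - (n+1)*u 0 = 1 := by
    rintro u (((rfl | rfl) | ⟨j, hj0, hj1, rfl⟩) | ⟨j, hj0, hj1, rfl⟩) <;>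
      refine ⟨⟨?_, ?_, ?_, ?_⟩, ?_⟩ <;>
      simp [Matrix.vecHead, Matrix.vecTail] <;> nlinarith
  -- elements of inS with l = 1 are in B
  have hl1B : ∀ u : Fin 3 → ℤ, inS n r u → u 1 - (n+1)*u 0 = 1 → u ∈ B := by
    intro u hu hl
    obtain ⟨h0, h2, h3, h4⟩ := hu
    have hx : u 0 = 0 ∨ u 0 = 1 ∨ u 0 = 2 := by
      have : u 0 ≤ 2 := by linarith
      omega
    rcases hx with hx | hx | hx
    · rw [hx, mul_zero, sub_zero] at hl
      rw [hx, mul_zero] at h4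
      have : u 2 = 0 ∨ u 2 = 1 := by omega
      rcases this with hz | hz
      · exact Or.inl (Or.inl (Or.inl (by funext i; fin_cases i <;> simp [hx, hl, hz])))
      · exact Or.inl (Or.inl (Or.inr (by funext i; fin_cases i <;> simp [hx, hl, hz])))
    · rw [hx, mul_one] at hl h4
      have hy : u 1 = n + 2 := by linarith
      refine Or.inl (Or.inr ⟨u 2, h2, by linarith, ?_⟩)
      funext i; fin_cases i <;> simp [hx, hy]
    · rw [hx] at hl h4
      have hy : u 1 = 2*n + 3 := by linarith
      refine Or.inr ⟨u 2, h2, by linarith, ?_⟩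
      funext i; fin_cases i <;> simp [hx, hy]
  -- reduction: any element of inS with l ≥ 2 splits off an element of B
  have hred : ∀ u : Fin 3 → ℤ, inS n r u → 2 ≤ u 1 - (n+1)*u 0 →
      ∃ b ∈ B, inS n r (u - b) := by
    intro u hu hl
    obtain ⟨h0, h2, h3, h4⟩ := hu
    have hx : u 0 = 0 ∨ u 0 = 1 ∨ 2 ≤ u 0 := by omega
    rcases hx with hx | hx | hx
    · rw [hx, mul_zero, sub_zero] at hl
      rw [hx, mul_zero] at h4
      rcases le_or_gt 1 (u 2) with hz | hz
      · refine ⟨![0,1,1], Or.inl (Or.inl (Or.inr rfl)), ?_, ?_, ?_, ?_⟩ <;>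
          simp [Pi.sub_apply, hx] <;> omega
      · refine ⟨![0,1,0], Or.inl (Or.inl (Or.inl rfl)), ?_, ?_, ?_, ?_⟩ <;>
          simp [Pi.sub_apply, hx] <;> omega
    · rw [hx, mul_one] at hl h3 h4
      rcases le_or_gt (u 2) (r+1) with hz | hz
      · refine ⟨![1, n+2, u 2], Or.inl (Or.inr ⟨u 2, h2, hz, rfl⟩), ?_, ?_, ?_, ?_⟩ <;>
          simp [Pi.sub_apply, hx] <;> linarith
      · refine ⟨![1, n+2, r+1], Or.inl (Or.inr ⟨r+1, by linarith, le_refl _, rfl⟩),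
          ?_, ?_, ?_, ?_⟩ <;> simp [Pi.sub_apply, hx] <;> linarith
    · have hru : 2*r ≤ r * u 0 := by nlinarith
      rcases le_or_gt (u 2) (2*r+1) with hz | hz
      · refine ⟨![2, 2*n+3, u 2], Or.inr ⟨u 2, h2, hz, rfl⟩, ?_, ?_, ?_, ?_⟩ <;>
          simp [Pi.sub_apply] <;> nlinarith
      · refine ⟨![2, 2*n+3, 2*r+1], Or.inr ⟨2*r+1, by linarith, le_refl _, rfl⟩,
          ?_, ?_, ?_, ?_⟩ <;> simp [Pi.sub_apply] <;> nlinarith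
  refine ⟨?_, ?_, fun u hu => (hBprop u hu).2⟩
  · ext u
    constructor
    · rintro ⟨huS, hune, hirr⟩
      have hu : inS n r u := (hSmem u).1 huS
      have hl1 : 1 ≤ u 1 - (n+1)*u 0 := by
        rcases lt_or_ge (u 1 - (n+1)*u 0) 1 with h | h
        · exfalso
          have h0 := l_nonneg n r u hu
          have : u 1 - (n+1)*u 0 = 0 := by omega
          exact hune (l_zero n r u hu this)
        · exact h
      rcases eq_or_lt_of_le hl1 with heq | hlt
      · exact hl1B u hu heq.symm
      · exfalso
        obtain ⟨b, hbB, hab⟩ := hred u hu (by omega)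
        obtain ⟨hbS, hbl⟩ := hBprop b hbB
        have hsplit := hirr b (u - b) ((hSmem b).2 hbS) ((hSmem (u-b)).2 hab) (by ring)
        rcases hsplit with hb0 | ha0
        · rw [hb0] at hbl; simp at hbl
        · have : u = b := by
            have := congrArg (· + b) ha0
            simpa [sub_add_cancel] using this
          rw [this] at hlt
          omega
    · intro hu
      obtain ⟨huin, hul⟩ := hBprop u hu
      refine ⟨(hSmem u).2 huin, ?_, ?_⟩
      · intro h; rw [h] at hul; simp at hul
      · intro a b haS hbS hab
        have ha := (hSmem a).1 haS
        have hb := (hSmem b).1 hbS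
        have hla := l_nonneg n r a ha
        have hlb := l_nonneg n r b hb
        have hsum : (a 1 - (n+1)*a 0) + (b 1 - (n+1)*b 0) = 1 := by
          rw [hab] at hul
          simp only [Pi.add_apply] at hul
          linarith
        rcases (by omega : a 1 - (n+1)*a 0 = 0 ∨ b 1 - (n+1)*b 0 = 0) with h | h
        · exact Or.inl (l_zero n r a ha h)
        · exact Or.inr (l_zero n r b hb h)
  · intro i; fin_cases i <;> simp [g, Matrix.vecHead, Matrix.vecTail] <;> ring
end

section
/- Let n ≥ 2 and r ≥ 1 be integers and let f = x^{2n+3}z − x^r y² − y²z, so that S(f) = {(2n+3,0,1), (r,2,0), (0,2,1)} ⊂ ℤ³. Then the intersection of the tropical variety 𝒯(f) with the nonnegative octant ℝ³_{≥0} equals the union of the three two-dimensional cones ⟨(2,2n+3,0),(2,2n+3,2r)⟩ ∪ ⟨(1,0,r),(2,2n+3,2r)⟩ ∪ ⟨(0,1,2),(2,2n+3,2r)⟩; in particular, for u = (2,2n+3,2r) the three inner products ⟨u,a⟩, a ∈ S(f), are all equal. -/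
open scoped BigOperators

/-- The standard inner product of `u ∈ ℝ³` with an integer exponent vector `a ∈ ℤ³`. -/
def dotZR (u : Fin 3 → ℝ) (a : Fin 3 → ℤ) : ℝ := ∑ j, u j * (a j : ℝ)

/-- The tropical variety of a polynomial with exponent set `A ⊂ ℤ³`: the set of `u ∈ ℝ³`
for which the minimum of `⟨u,a⟩` over `a ∈ A` is attained by at least two distinct
elements of `A`. -/
def tropicalVar (A : Set (Fin 3 → ℤ)) : Set (Fin 3 → ℝ) :=
  { u | ∃ a ∈ A, ∃ b ∈ A, a ≠ b ∧ dotZR u a = dotZR u b ∧ ∀ c ∈ A, dotZR u a ≤ dotZR u c }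

/-!
On `ℝ³_{≥0}` the three linear forms `⟨p,a⟩`, `a ∈ S(f)`, are `N x + z`, `r x + 2y` and `2y + z`
with `N = 2n+3`. The minimum is attained twice exactly on the three closed regions where two of
them agree and are at most the third. Each region, cut with the octant, is a two-dimensional cone
with one ray on the boundary of the octant and the other on the common ray `ℝ_{≥0}(2,N,2r)` where
all three forms agree.
-/

lemma forall_fin_three {P : Fin 3 → Prop} : (∀ j, P j) ↔ P 0 ∧ P 1 ∧ P 2 :=
  ⟨fun h => ⟨h 0, h 1, h 2⟩, fun ⟨h₀, h₁, h₂⟩ j => by fin_cases j <;> assumption⟩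

lemma mem_coneOf_pair_iff {n : ℕ} {v w : Fin n → ℤ} {p : Fin n → ℝ} :
    p ∈ coneOf ![v, w] ↔ ∃ s t : ℝ, 0 ≤ s ∧ 0 ≤ t ∧ ∀ j, p j = s * v j + t * w j := by
  simp only [coneOf, Set.mem_ofPred_eq, funext_iff, Fin.sum_univ_two, Fin.forall_fin_two]
  constructor
  · rintro ⟨c, hc, hp⟩
    exact ⟨c 0, c 1, hc.1, hc.2, by simpa [toR] using hp⟩
  · rintro ⟨s, t, hs, ht, hp⟩
    exact ⟨![s, t], ⟨hs, ht⟩, by simpa [toR] using hp⟩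

lemma dotZR_eq (u : Fin 3 → ℝ) (a : Fin 3 → ℤ) :
    dotZR u a = u 0 * a 0 + u 1 * a 1 + u 2 * a 2 := by
  simp [dotZR, Fin.sum_univ_three]

lemma mem_tropicalVar_triple_iff {a b c : Fin 3 → ℤ} (hab : a ≠ b) (hac : a ≠ c) (hbc : b ≠ c)
    {u : Fin 3 → ℝ} :
    u ∈ tropicalVar {a, b, c} ↔
      (dotZR u a = dotZR u b ∧ dotZR u b ≤ dotZR u c) ∨
      (dotZR u a = dotZR u c ∧ dotZR u c ≤ dotZR u b) ∨
      (dotZR u b = dotZR u c ∧ dotZR u c ≤ dotZR u a) := by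
  simp only [tropicalVar, Set.mem_ofPred_eq, Set.mem_insert_iff, Set.mem_singleton_iff,
    exists_eq_or_imp, exists_eq_left, forall_eq_or_imp, forall_eq, ne_eq, not_true_eq_false,
    false_and, false_or, or_false, hab, hac, hbc, Ne.symm hab, Ne.symm hac, Ne.symm hbc,
    not_false_eq_true, true_and]
  generalize dotZR u a = α, dotZR u b = β, dotZR u c = γ
  grind

section BSingularity

variable {N r : ℤ} {p : Fin 3 → ℝ}

/-! The exponents are `a₁ = (N,0,1)`, `a₂ = (r,2,0)`, `a₃ = (0,2,1)`; `tieᵢⱼ` is the closed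
region where `⟨p,aᵢ⟩ = ⟨p,aⱼ⟩` is the minimum of the three. -/

lemma mem_coneOf_iff_tie₁₃ (hN : 0 ≤ N) (hr : 0 < r) :
    p ∈ coneOf ![![2, N, 0], ![2, N, 2 * r]] ↔ (∀ j, 0 ≤ p j) ∧
      dotZR p ![N, 0, 1] = dotZR p ![0, 2, 1] ∧ dotZR p ![0, 2, 1] ≤ dotZR p ![r, 2, 0] := by
  have hN' : (0 : ℝ) ≤ N := by exact_mod_cast hN
  have hr' : (0 : ℝ) < r := by exact_mod_cast hr
  simp only [mem_coneOf_pair_iff, dotZR_eq, forall_fin_three, Matrix.cons_val_zero,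
    Matrix.cons_val_one, Matrix.cons_val_two, Matrix.head_cons, Matrix.tail_cons]
  push_cast
  constructor
  · rintro ⟨s, t, hs, ht, h₀, h₁, h₂⟩
    rw [h₀, h₁, h₂]
    exact ⟨⟨by positivity, by positivity, by positivity⟩, by ring, by nlinarith⟩
  · rintro ⟨⟨-, -, hz⟩, heq, hle⟩
    refine ⟨(r * p 0 - p 2) / (2 * r), p 2 / (2 * r), div_nonneg (by linarith) (by positivity),
      by positivity, ?_, ?_, ?_⟩ <;> field_simp
    · ring
    · linear_combination -r * heq
    · ring

lemma mem_coneOf_iff_tie₂₃ (hN : 0 < N) (hr : 0 ≤ r) :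
    p ∈ coneOf ![![1, 0, r], ![2, N, 2 * r]] ↔ (∀ j, 0 ≤ p j) ∧
      dotZR p ![r, 2, 0] = dotZR p ![0, 2, 1] ∧ dotZR p ![0, 2, 1] ≤ dotZR p ![N, 0, 1] := by
  have hN' : (0 : ℝ) < N := by exact_mod_cast hN
  have hr' : (0 : ℝ) ≤ r := by exact_mod_cast hr
  simp only [mem_coneOf_pair_iff, dotZR_eq, forall_fin_three, Matrix.cons_val_zero,
    Matrix.cons_val_one, Matrix.cons_val_two, Matrix.head_cons, Matrix.tail_cons]
  push_cast
  constructor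
  · rintro ⟨s, t, hs, ht, h₀, h₁, h₂⟩
    rw [h₀, h₁, h₂]
    exact ⟨⟨by positivity, by positivity, by positivity⟩, by ring, by nlinarith⟩
  · rintro ⟨⟨-, hy, -⟩, heq, hle⟩
    refine ⟨p 0 - 2 * p 1 / N, p 1 / N, ?_, by positivity, ?_, ?_, ?_⟩ <;> field_simp
    · linarith
    · ring
    · ring
    · linear_combination -N * heq

lemma mem_coneOf_iff_tie₁₂ (hN : 0 ≤ N) (hr : 0 ≤ r) :
    p ∈ coneOf ![![0, 1, 2], ![2, N, 2 * r]] ↔ (∀ j, 0 ≤ p j) ∧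
      dotZR p ![N, 0, 1] = dotZR p ![r, 2, 0] ∧ dotZR p ![r, 2, 0] ≤ dotZR p ![0, 2, 1] := by
  have hN' : (0 : ℝ) ≤ N := by exact_mod_cast hN
  have hr' : (0 : ℝ) ≤ r := by exact_mod_cast hr
  simp only [mem_coneOf_pair_iff, dotZR_eq, forall_fin_three, Matrix.cons_val_zero,
    Matrix.cons_val_one, Matrix.cons_val_two, Matrix.head_cons, Matrix.tail_cons]
  push_cast
  constructor
  · rintro ⟨s, t, hs, ht, h₀, h₁, h₂⟩
    rw [h₀, h₁, h₂]
    exact ⟨⟨by positivity, by positivity, by positivity⟩, by ring, by nlinarith⟩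
  · rintro ⟨⟨hx, -, -⟩, heq, hle⟩
    refine ⟨p 1 - N * p 0 / 2, p 0 / 2, ?_, by positivity, ?_, ?_, ?_⟩ <;> field_simp
    · linarith
    · ring
    · ring
    · linear_combination heq

theorem tropicalVar_BSingularity_inter_nonneg (hN : 0 < N) (hr : 0 < r) :
    tropicalVar {![N, 0, 1], ![r, 2, 0], ![0, 2, 1]} ∩ {x | ∀ j, 0 ≤ x j} =
      coneOf ![![2, N, 0], ![2, N, 2 * r]] ∪ coneOf ![![1, 0, r], ![2, N, 2 * r]] ∪
        coneOf ![![0, 1, 2], ![2, N, 2 * r]] := by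
  have h₁₂ : (![N, 0, 1] : Fin 3 → ℤ) ≠ ![r, 2, 0] := fun h => by simpa using congrFun h 1
  have h₁₃ : (![N, 0, 1] : Fin 3 → ℤ) ≠ ![0, 2, 1] := fun h => by simpa using congrFun h 1
  have h₂₃ : (![r, 2, 0] : Fin 3 → ℤ) ≠ ![0, 2, 1] := fun h => by simpa using congrFun h 2
  ext p
  rw [Set.mem_inter_iff, mem_tropicalVar_triple_iff h₁₂ h₁₃ h₂₃, Set.mem_union, Set.mem_union,
    mem_coneOf_iff_tie₁₃ hN.le hr, mem_coneOf_iff_tie₂₃ hN hr.le, mem_coneOf_iff_tie₁₂ hN.le hr.le]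
  tauto

end BSingularity

/-- for `f = x^{2n+3}z − x^r y² − y²z` (the `B₍₂ᵣ₋₁,ₙ₎`-singularity), with
`S(f) = {(2n+3,0,1),(r,2,0),(0,2,1)}`, the intersection of the tropical variety `𝒯(f)`
with the nonnegative octant is the union of the three two-dimensional cones
`⟨(2,2n+3,0),(2,2n+3,2r)⟩ ∪ ⟨(1,0,r),(2,2n+3,2r)⟩ ∪ ⟨(0,1,2),(2,2n+3,2r)⟩`; in
particular the three inner products of `u = (2,2n+3,2r)` with the exponents coincide. -/
theorem B_odd_tropical_variety (n r : ℤ) (hn : 2 ≤ n) (hr : 1 ≤ r) :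
    let A : Set (Fin 3 → ℤ) := {![2 * n + 3, 0, 1], ![r, 2, 0], ![0, 2, 1]}
    let u : Fin 3 → ℤ := ![2, 2 * n + 3, 2 * r]
    (tropicalVar A ∩ { x | ∀ j, 0 ≤ x j } =
      coneOf ![![2, 2 * n + 3, 0], u] ∪ coneOf ![![1, 0, r], u] ∪
        coneOf ![![0, 1, 2], u]) ∧
    dotZR (toR u) ![2 * n + 3, 0, 1] = dotZR (toR u) ![r, 2, 0] ∧
    dotZR (toR u) ![r, 2, 0] = dotZR (toR u) ![0, 2, 1] := by
  intro A u
  refine ⟨tropicalVar_BSingularity_inter_nonneg (by omega) (by omega), ?_, ?_⟩ <;>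
    simp only [u, dotZR_eq, toR, Matrix.cons_val_zero, Matrix.cons_val_one, Matrix.cons_val_two,
      Matrix.head_cons, Matrix.tail_cons] <;> push_cast <;> ring
end

section
/- Let n ≥ 2 and r ≥ 1 be integers and let f = x^{n+r+2}y − x^{2n+3}z + y²z, so that S(f) = {(n+r+2,1,0), (2n+3,0,1), (0,2,1)} ⊂ ℤ³. Then the intersection of the tropical variety 𝒯(f) with the nonnegative octant ℝ³_{≥0} equals the union of the three two-dimensional cones ⟨(0,1,1),(2,2n+3,2r+1)⟩ ∪ ⟨(2,2n+3,0),(2,2n+3,2r+1)⟩ ∪ ⟨(1,0,n+r+2),(2,2n+3,2r+1)⟩; in particular, for u = (2,2n+3,2r+1) the three inner products ⟨u,a⟩, a ∈ S(f), are all equal. -/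
open scoped BigOperators

lemma mem_coneOf_pair {v w : Fin 3 → ℤ} {x : Fin 3 → ℝ} :
    x ∈ coneOf ![v, w] ↔
      ∃ c0 c1 : ℝ, 0 ≤ c0 ∧ 0 ≤ c1 ∧ ∀ j, x j = c0 * (v j : ℝ) + c1 * (w j : ℝ) := by
  constructor
  · rintro ⟨c, hc, rfl⟩
    exact ⟨c 0, c 1, hc 0, hc 1, fun j => by simp [Fin.sum_univ_two, toR]⟩
  · rintro ⟨c0, c1, h0, h1, hx⟩
    refine ⟨![c0, c1], ?_, ?_⟩
    · intro i; fin_cases i <;> assumption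
    · funext j; simp [Fin.sum_univ_two, toR, hx j]

lemma dot_eval (x : Fin 3 → ℝ) (a : Fin 3 → ℤ) :
    dotZR x a = x 0 * (a 0 : ℝ) + x 1 * (a 1 : ℝ) + x 2 * (a 2 : ℝ) := by
  simp [dotZR, Fin.sum_univ_three]

lemma cone1_of {N R x y z : ℝ} (hx : 0 ≤ x)
    (heq : (N + R + 2) * x + y = (2 * N + 3) * x + z)
    (hle : (N + R + 2) * x + y ≤ 2 * y + z) :
    ∃ c0 c1 : ℝ, 0 ≤ c0 ∧ 0 ≤ c1 ∧
      x = c0 * 0 + c1 * 2 ∧ y = c0 * 1 + c1 * (2 * N + 3) ∧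
      z = c0 * 1 + c1 * (2 * R + 1) := by
  refine ⟨y - (2 * N + 3) * (x / 2), x / 2, by nlinarith, by linarith, by ring, by ring, by
    nlinarith⟩

lemma cone2_of {N R x y z : ℝ} (hR : 1 ≤ R) (hx : 0 ≤ x) (hz : 0 ≤ z)
    (heq : (2 * N + 3) * x + z = 2 * y + z)
    (hle : (2 * N + 3) * x + z ≤ (N + R + 2) * x + y) :
    ∃ c0 c1 : ℝ, 0 ≤ c0 ∧ 0 ≤ c1 ∧
      x = c0 * 2 + c1 * 2 ∧ y = c0 * (2 * N + 3) + c1 * (2 * N + 3) ∧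
      z = c0 * 0 + c1 * (2 * R + 1) := by
  have hR1 : (0:ℝ) < 2 * R + 1 := by linarith
  have key : 2 * z ≤ (2 * R + 1) * x := by nlinarith
  have hdiv : z / (2 * R + 1) ≤ x / 2 := by
    rw [div_le_div_iff₀ hR1 (by norm_num : (0:ℝ) < 2)]; linarith
  refine ⟨x / 2 - z / (2 * R + 1), z / (2 * R + 1), by linarith,
    div_nonneg hz hR1.le, by ring, ?_, ?_⟩
  · have h2 : (2 * N + 3) * x = 2 * y := by linarith
    have : (x / 2 - z / (2 * R + 1)) * (2 * N + 3) + z / (2 * R + 1) * (2 * N + 3)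
        = (2 * N + 3) * (x / 2) := by ring
    rw [this]; linarith
  · rw [div_mul_cancel₀ z hR1.ne']; ring

lemma cone3_of {N R x y z : ℝ} (hN : 2 ≤ N) (hx : 0 ≤ x) (hy : 0 ≤ y)
    (heq : (N + R + 2) * x + y = 2 * y + z)
    (hle : (N + R + 2) * x + y ≤ (2 * N + 3) * x + z) :
    ∃ c0 c1 : ℝ, 0 ≤ c0 ∧ 0 ≤ c1 ∧
      x = c0 * 1 + c1 * 2 ∧ y = c0 * 0 + c1 * (2 * N + 3) ∧
      z = c0 * (N + R + 2) + c1 * (2 * R + 1) := by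
  have hN1 : (0:ℝ) < 2 * N + 3 := by linarith
  have key : 2 * y ≤ (2 * N + 3) * x := by nlinarith
  have hdiv : 2 * (y / (2 * N + 3)) ≤ x := by
    rw [show 2 * (y / (2 * N + 3)) = (2 * y) / (2 * N + 3) by ring, div_le_iff₀ hN1]
    nlinarith
  refine ⟨x - 2 * (y / (2 * N + 3)), y / (2 * N + 3), by linarith,
    div_nonneg hy hN1.le, by ring, ?_, ?_⟩
  · rw [div_mul_cancel₀ y hN1.ne']; ring
  · have hz' : z = (N + R + 2) * x - y := by linarith
    have hexp : (x - 2 * (y / (2 * N + 3))) * (N + R + 2) + y / (2 * N + 3) * (2 * R + 1)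
        = (N + R + 2) * x - (y / (2 * N + 3)) * (2 * N + 3) := by ring
    rw [hz', hexp, div_mul_cancel₀ y hN1.ne']

theorem B_even_tropical_variety_aux (n r : ℤ) (hn : 2 ≤ n) (hr : 1 ≤ r) :
    (tropicalVar {![n + r + 2, 1, 0], ![2 * n + 3, 0, 1], ![0, 2, 1]} ∩
        { x | ∀ j, 0 ≤ x j } =
      coneOf ![![0, 1, 1], ![2, 2 * n + 3, 2 * r + 1]] ∪
        coneOf ![![2, 2 * n + 3, 0], ![2, 2 * n + 3, 2 * r + 1]] ∪
        coneOf ![![1, 0, n + r + 2], ![2, 2 * n + 3, 2 * r + 1]]) ∧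
    dotZR (toR ![2, 2 * n + 3, 2 * r + 1]) ![n + r + 2, 1, 0] =
      dotZR (toR ![2, 2 * n + 3, 2 * r + 1]) ![2 * n + 3, 0, 1] ∧
    dotZR (toR ![2, 2 * n + 3, 2 * r + 1]) ![2 * n + 3, 0, 1] =
      dotZR (toR ![2, 2 * n + 3, 2 * r + 1]) ![0, 2, 1] := by
  have hN : (2:ℝ) ≤ (n:ℝ) := by exact_mod_cast hn
  have hR : (1:ℝ) ≤ (r:ℝ) := by exact_mod_cast hr
  set A1 : Fin 3 → ℤ := ![n + r + 2, 1, 0] with hA1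
  set A2 : Fin 3 → ℤ := ![2 * n + 3, 0, 1] with hA2
  set A3 : Fin 3 → ℤ := ![0, 2, 1] with hA3
  have ne12 : A1 ≠ A2 := by
    intro h; have := congrFun h 1; simp [hA1, hA2] at this
  have ne13 : A1 ≠ A3 := by
    intro h; have := congrFun h 1; simp [hA1, hA3] at this
  have ne23 : A2 ≠ A3 := by
    intro h; have := congrFun h 0; simp [hA2, hA3] at this; omega
  have m1 : A1 ∈ ({A1, A2, A3} : Set (Fin 3 → ℤ)) := by simp
  have m2 : A2 ∈ ({A1, A2, A3} : Set (Fin 3 → ℤ)) := by simp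
  have m3 : A3 ∈ ({A1, A2, A3} : Set (Fin 3 → ℤ)) := by simp
  have d1 : ∀ x : Fin 3 → ℝ, dotZR x A1 = ((n:ℝ) + (r:ℝ) + 2) * x 0 + x 1 := by
    intro x; rw [dot_eval]; simp [hA1]; push_cast; ring
  have d2 : ∀ x : Fin 3 → ℝ, dotZR x A2 = (2 * (n:ℝ) + 3) * x 0 + x 2 := by
    intro x; rw [dot_eval]; simp [hA2]; push_cast; ring
  have d3 : ∀ x : Fin 3 → ℝ, dotZR x A3 = 2 * x 1 + x 2 := by
    intro x; rw [dot_eval]; simp [hA3]; ring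
  refine ⟨?_, ?_, ?_⟩
  · ext x
    simp only [Set.mem_inter_iff, Set.mem_union, Set.mem_setOf_eq]
    constructor
    · rintro ⟨⟨a, ha, b, hb, hab, heq, hmin⟩, hoct⟩
      have hx := hoct 0
      have hy := hoct 1
      have hz := hoct 2
      have hf3 := hmin A3 m3
      have hf2 := hmin A2 m2
      have hf1 := hmin A1 m1
      have inC1 : dotZR x A1 = dotZR x A2 → dotZR x A1 ≤ dotZR x A3 →
          x ∈ coneOf ![![0, 1, 1], ![2, 2 * n + 3, 2 * r + 1]] := by
        intro h12 h13
        rw [d1, d2] at h12; rw [d1, d3] at h13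
        obtain ⟨c0, c1, hc0, hc1, e0, e1, e2⟩ := cone1_of hx h12 h13
        refine mem_coneOf_pair.2 ⟨c0, c1, hc0, hc1, fun j => ?_⟩
        fin_cases j <;> simp <;> push_cast
        · linarith [e0]
        · linarith [e1]
        · linarith [e2]
      have inC2 : dotZR x A2 = dotZR x A3 → dotZR x A2 ≤ dotZR x A1 →
          x ∈ coneOf ![![2, 2 * n + 3, 0], ![2, 2 * n + 3, 2 * r + 1]] := by
        intro h23 h21
        rw [d2, d3] at h23; rw [d2, d1] at h21
        obtain ⟨c0, c1, hc0, hc1, e0, e1, e2⟩ := cone2_of hR hx hz h23 h21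
        refine mem_coneOf_pair.2 ⟨c0, c1, hc0, hc1, fun j => ?_⟩
        fin_cases j <;> simp <;> push_cast
        · linarith [e0]
        · linarith [e1]
        · linarith [e2]
      have inC3 : dotZR x A1 = dotZR x A3 → dotZR x A1 ≤ dotZR x A2 →
          x ∈ coneOf ![![1, 0, n + r + 2], ![2, 2 * n + 3, 2 * r + 1]] := by
        intro h13 h12
        rw [d1, d3] at h13; rw [d1, d2] at h12
        obtain ⟨c0, c1, hc0, hc1, e0, e1, e2⟩ := cone3_of hN hx hy h13 h12
        refine mem_coneOf_pair.2 ⟨c0, c1, hc0, hc1, fun j => ?_⟩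
        fin_cases j <;> simp <;> push_cast
        · linarith [e0]
        · linarith [e1]
        · linarith [e2]
      simp only [Set.mem_insert_iff, Set.mem_singleton_iff] at ha hb
      rcases ha with rfl | rfl | rfl <;> rcases hb with rfl | rfl | rfl
      · exact absurd rfl hab
      · exact Or.inl (Or.inl (inC1 heq hf3))
      · exact Or.inr (inC3 heq hf2)
      · exact Or.inl (Or.inl (inC1 heq.symm (by rw [← heq]; exact hf3)))
      · exact absurd rfl hab
      · exact Or.inl (Or.inr (inC2 heq hf1))
      · exact Or.inr (inC3 heq.symm (by rw [← heq]; exact hf2))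
      · exact Or.inl (Or.inr (inC2 heq.symm (by rw [← heq]; exact hf1)))
      · exact absurd rfl hab
    · intro hcone
      have base : ∀ (P Q : Fin 3 → ℤ), P ∈ ({A1, A2, A3} : Set (Fin 3 → ℤ)) →
          Q ∈ ({A1, A2, A3} : Set (Fin 3 → ℤ)) → P ≠ Q →
          dotZR x P = dotZR x Q → dotZR x P ≤ dotZR x A1 →
          dotZR x P ≤ dotZR x A2 → dotZR x P ≤ dotZR x A3 →
          x ∈ tropicalVar {A1, A2, A3} := by
        intro P Q hP hQ hPQ hEQ h1 h2 h3
        refine ⟨P, hP, Q, hQ, hPQ, hEQ, ?_⟩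
        intro c hc
        simp only [Set.mem_insert_iff, Set.mem_singleton_iff] at hc
        rcases hc with rfl | rfl | rfl <;> assumption
      rcases hcone with (h | h) | h
      · obtain ⟨c0, c1, hc0, hc1, hco⟩ := mem_coneOf_pair.1 h
        have e0 : x 0 = c1 * 2 := by have := hco 0; simpa using this
        have e1 : x 1 = c0 + c1 * (2 * (n:ℝ) + 3) := by
          have := hco 1; simp at this; push_cast at this; linarith
        have e2 : x 2 = c0 + c1 * (2 * (r:ℝ) + 1) := by
          have := hco 2; simp at this; push_cast at this; linarith
        refine ⟨base A1 A2 m1 m2 ne12 ?_ ?_ ?_ ?_, ?_⟩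
        · rw [d1, d2, e0, e1, e2]; ring
        · rw [d1]
        · rw [d1, d2, e0, e1, e2]; nlinarith
        · rw [d1, d3, e0, e1, e2]; nlinarith
        · intro j; fin_cases j
          · show (0:ℝ) ≤ x 0; rw [e0]; linarith
          · show (0:ℝ) ≤ x 1; rw [e1]
            nlinarith [mul_nonneg hc1 (by linarith : (0:ℝ) ≤ 2 * (n:ℝ) + 3)]
          · show (0:ℝ) ≤ x 2; rw [e2]
            nlinarith [mul_nonneg hc1 (by linarith : (0:ℝ) ≤ 2 * (r:ℝ) + 1)]
      · obtain ⟨c0, c1, hc0, hc1, hco⟩ := mem_coneOf_pair.1 h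
        have e0 : x 0 = c0 * 2 + c1 * 2 := by
          have := hco 0; simp at this; push_cast at this; linarith
        have e1 : x 1 = c0 * (2 * (n:ℝ) + 3) + c1 * (2 * (n:ℝ) + 3) := by
          have := hco 1; simp at this; push_cast at this; linarith
        have e2 : x 2 = c1 * (2 * (r:ℝ) + 1) := by
          have := hco 2; simp at this; push_cast at this; linarith
        refine ⟨base A2 A3 m2 m3 ne23 ?_ ?_ ?_ ?_, ?_⟩
        · rw [d2, d3, e0, e1, e2]; ring
        · rw [d2, d1, e0, e1, e2]
          nlinarith [mul_nonneg hc0 (by linarith : (0:ℝ) ≤ 2 * (r:ℝ) + 1)]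
        · rw [d2]
        · rw [d2, d3, e0, e1, e2]; exact le_of_eq (by ring)
        · intro j; fin_cases j
          · show (0:ℝ) ≤ x 0; rw [e0]; linarith
          · show (0:ℝ) ≤ x 1; rw [e1]
            nlinarith [mul_nonneg hc0 (by linarith : (0:ℝ) ≤ 2 * (n:ℝ) + 3),
              mul_nonneg hc1 (by linarith : (0:ℝ) ≤ 2 * (n:ℝ) + 3)]
          · show (0:ℝ) ≤ x 2; rw [e2]
            nlinarith [mul_nonneg hc1 (by linarith : (0:ℝ) ≤ 2 * (r:ℝ) + 1)]
      · obtain ⟨c0, c1, hc0, hc1, hco⟩ := mem_coneOf_pair.1 h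
        have e0 : x 0 = c0 + c1 * 2 := by
          have := hco 0; simp at this; push_cast at this; linarith
        have e1 : x 1 = c1 * (2 * (n:ℝ) + 3) := by
          have := hco 1; simp at this; push_cast at this; linarith
        have e2 : x 2 = c0 * ((n:ℝ) + (r:ℝ) + 2) + c1 * (2 * (r:ℝ) + 1) := by
          have := hco 2; simp at this; push_cast at this; linarith
        refine ⟨base A1 A3 m1 m3 ne13 ?_ ?_ ?_ ?_, ?_⟩
        · rw [d1, d3, e0, e1, e2]; ring
        · rw [d1]
        · rw [d1, d2, e0, e1, e2]
          nlinarith [mul_nonneg hc0 (by linarith : (0:ℝ) ≤ (n:ℝ) - (r:ℝ) + 1 + 2 * (r:ℝ))]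
        · rw [d1, d3, e0, e1, e2]; exact le_of_eq (by ring)
        · intro j; fin_cases j
          · show (0:ℝ) ≤ x 0; rw [e0]; linarith
          · show (0:ℝ) ≤ x 1; rw [e1]
            nlinarith [mul_nonneg hc1 (by linarith : (0:ℝ) ≤ 2 * (n:ℝ) + 3)]
          · show (0:ℝ) ≤ x 2; rw [e2]
            nlinarith [mul_nonneg hc0 (by linarith : (0:ℝ) ≤ (n:ℝ) + (r:ℝ) + 2),
              mul_nonneg hc1 (by linarith : (0:ℝ) ≤ 2 * (r:ℝ) + 1)]
  · rw [d1, d2]; simp [toR]; push_cast; ring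
  · rw [d2, d3]; simp [toR]; push_cast; ring

/-- for `f = x^{n+r+2}y − x^{2n+3}z + y²z` (the `B₍₂ᵣ,ₙ₎`-singularity), with
`S(f) = {(n+r+2,1,0),(2n+3,0,1),(0,2,1)}`, the intersection of the tropical variety
`𝒯(f)` with the nonnegative octant is the union of the three two-dimensional cones
`⟨(0,1,1),(2,2n+3,2r+1)⟩ ∪ ⟨(2,2n+3,0),(2,2n+3,2r+1)⟩ ∪ ⟨(1,0,n+r+2),(2,2n+3,2r+1)⟩`;
in particular the three inner products of `u = (2,2n+3,2r+1)` with the exponents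
coincide. -/
theorem B_even_tropical_variety (n r : ℤ) (hn : 2 ≤ n) (hr : 1 ≤ r) :
    let A : Set (Fin 3 → ℤ) := {![n + r + 2, 1, 0], ![2 * n + 3, 0, 1], ![0, 2, 1]}
    let u : Fin 3 → ℤ := ![2, 2 * n + 3, 2 * r + 1]
    (tropicalVar A ∩ { x | ∀ j, 0 ≤ x j } =
      coneOf ![![0, 1, 1], u] ∪ coneOf ![![2, 2 * n + 3, 0], u] ∪
        coneOf ![![1, 0, n + r + 2], u]) ∧
    dotZR (toR u) ![n + r + 2, 1, 0] = dotZR (toR u) ![2 * n + 3, 0, 1] ∧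
    dotZR (toR u) ![2 * n + 3, 0, 1] = dotZR (toR u) ![0, 2, 1] := by
  exact B_even_tropical_variety_aux n r hn hr
end

section
/- Let σ = ⟨(0,1,0),(0,0,1),(6,8,9)⟩ ⊆ ℝ³, a three-dimensional simplicial cone with primitive integer generators, and let l : ℝ³ → ℝ be the unique linear form with l(0,1,0) = l(0,0,1) = l(6,8,9) = 1, namely l(x,y,z) = (3y + 3z − 8x)/3. Then (1,2,2) ∈ σ ∩ ℤ³ is irreducible (belongs to the Hilbert basis of σ), yet l(1,2,2) = 4/3 > 1. Consequently the Hilbert basis of σ is not contained in the profile p_σ = σ ∩ l⁻¹([0,1]). -/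
open scoped BigOperators

/-!
Solving `x = c₀ (0,1,0) + c₁ (0,0,1) + c₂ (6,8,9)` for the coefficients describes `σ` by the
inequalities `x₀ ≥ 0`, `3x₁ ≥ 4x₀`, `2x₂ ≥ 3x₀`. In a decomposition `(1,2,2) = a + b` in `S_σ` one
summand, say `a`, has `a₀ = 0`, hence `a₁, a₂ ≥ 0`; the other has `b₀ = 1`, hence `b₁, b₂ ≥ 2`
by integrality, which forces `a = 0`. So `(1,2,2)` is irreducible, while `l(1,2,2) = 4/3`.
-/

abbrev ellipticGens : Fin 3 → (Fin 3 → ℤ) := ![![0, 1, 0], ![0, 0, 1], ![6, 8, 9]]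

lemma sum_smul_toR_ellipticGens (c : Fin 3 → ℝ) :
    ∑ i, c i • toR (ellipticGens i) = ![6 * c 2, c 0 + 8 * c 2, c 1 + 9 * c 2] := by
  funext j
  fin_cases j <;> simp [toR, Fin.sum_univ_three] <;> ring

lemma mem_coneOf_ellipticGens_iff (x : Fin 3 → ℝ) :
    x ∈ coneOf ellipticGens ↔ 0 ≤ x 0 ∧ 4 * x 0 ≤ 3 * x 1 ∧ 3 * x 0 ≤ 2 * x 2 := by
  simp only [coneOf, Set.mem_ofPred_eq, sum_smul_toR_ellipticGens]
  constructor
  · rintro ⟨c, hc, rfl⟩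
    simp only [Matrix.cons_val_zero, Matrix.cons_val_one, Matrix.cons_val_two, Matrix.tail_cons,
      Matrix.head_cons]
    refine ⟨?_, ?_, ?_⟩ <;> linarith [hc 0, hc 1, hc 2]
  · rintro ⟨h0, h1, h2⟩
    refine ⟨![x 1 - 4 / 3 * x 0, x 2 - 3 / 2 * x 0, x 0 / 6], ?_, ?_⟩
    · intro i
      fin_cases i <;> simp <;> linarith
    · funext j
      fin_cases j <;> simp <;> ring

lemma mem_latticePoints_ellipticGens_iff (u : Fin 3 → ℤ) :
    u ∈ latticePoints (coneOf ellipticGens) ↔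
      0 ≤ u 0 ∧ 4 * u 0 ≤ 3 * u 1 ∧ 3 * u 0 ≤ 2 * u 2 := by
  simp only [latticePoints, Set.mem_ofPred_eq, mem_coneOf_ellipticGens_iff, toR]
  norm_cast

lemma isIrreducibleElt_one_two_two :
    IsIrreducibleElt (latticePoints (coneOf ellipticGens)) ![1, 2, 2] := by
  simp only [IsIrreducibleElt, mem_latticePoints_ellipticGens_iff]
  refine ⟨by simp, fun h => by simpa using congrFun h 0, ?_⟩
  rintro a b ⟨ha0, ha1, ha2⟩ ⟨hb0, hb1, hb2⟩ hab
  have e0 : 1 = a 0 + b 0 := by simpa using congrFun hab 0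
  have e1 : 2 = a 1 + b 1 := by simpa using congrFun hab 1
  have e2 : 2 = a 2 + b 2 := by simpa using congrFun hab 2
  rcases le_or_gt (a 0) 0 with ha | ha
  · left
    funext i
    fin_cases i <;> simp <;> omega
  · right
    funext i
    fin_cases i <;> simp <;> omega

/-- for the simplicial cone `σ = ⟨(0,1,0),(0,0,1),(6,8,9)⟩` and the linear
form `l(x,y,z) = (3y + 3z − 8x)/3` (the unique one taking value `1` on the generators),
the lattice point `(1,2,2)` is irreducible in `S_σ = σ ∩ ℤ³` yet `l(1,2,2) = 4/3 > 1`;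
consequently the Hilbert basis of `σ` is not contained in the profile
`p_σ = σ ∩ l⁻¹([0,1])`. -/
theorem elliptic_hilbert_basis_not_in_profile :
    let v : Fin 3 → (Fin 3 → ℤ) := ![![0, 1, 0], ![0, 0, 1], ![6, 8, 9]]
    let σ := coneOf v
    let S := latticePoints σ
    let l : (Fin 3 → ℝ) → ℝ := fun x => (3 * x 1 + 3 * x 2 - 8 * x 0) / 3
    (∀ i, l (toR (v i)) = 1) ∧
    IsIrreducibleElt S ![1, 2, 2] ∧
    l (toR ![1, 2, 2]) = 4 / 3 ∧ (1 : ℝ) < 4 / 3 ∧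
    ¬ (∀ u : Fin 3 → ℤ, IsIrreducibleElt S u →
        toR u ∈ σ ∩ l ⁻¹' Set.Icc (0 : ℝ) 1) := by
  intro v σ S l
  have hl : l (toR ![1, 2, 2]) = 4 / 3 := by norm_num [l, toR, Matrix.cons_val_two]
  refine ⟨?_, isIrreducibleElt_one_two_two, hl, by norm_num, fun h => ?_⟩
  · intro i
    fin_cases i <;> norm_num [l, v, toR, Matrix.cons_val_two]
  · have hprofile := (h _ isIrreducibleElt_one_two_two).2.2
    rw [hl] at hprofile
    norm_num at hprofile
end

section
/- Let σ₁ = ⟨(1,0,0),(0,0,1),(3,1,0),(6,8,9)⟩ ⊆ ℝ³ (a maximal cone of the dual Newton polyhedron of the hypersurface y³ + xz² − x⁴ = 0). Then the Hilbert basis of σ₁ is exactly { (1,0,0), (0,0,1), (3,1,0), (6,8,9), (1,1,1), (3,4,5) }; that is, these six vectors are precisely the irreducible elements of S_{σ₁} = σ₁ ∩ ℤ³, and they generate the monoid S_{σ₁}. -/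
open scoped BigOperators

/-!
σ₁ is cut out by the facet inequalities `y ≥ 0`, `z ≥ 0`, `3y ≤ 4x`, `3y ≤ x + 2z`. From every
nonzero lattice point `u` of σ₁ one of the six vectors `b` can be subtracted without leaving σ₁;
which one is read off from the facet inequalities that are tight at `u`. As the weight `x + z` is
nonnegative on σ₁ and positive on the six vectors, this descent shows both that they generate
`S_{σ₁}` and that every irreducible element is one of them. Conversely, each of the six vectors is
irreducible, which is a finite check.
-/

theorem toR_mem_coneOf_iff {n r : ℕ} (v : Fin r → Fin n → ℤ) (u : Fin n → ℤ) :
    toR u ∈ coneOf v ↔ ∃ c : Fin r → ℝ, (∀ i, 0 ≤ c i) ∧ ∀ j, (u j : ℝ) = ∑ i, c i * v i j := by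
  simp only [coneOf, Set.mem_ofPred_eq, funext_iff, toR, Finset.sum_apply, Pi.smul_apply,
    smul_eq_mul]

theorem AddSubmonoid.closure_eq_of_exists_sub_mem {M : Type*} [AddCommGroup M]
    {S : AddSubmonoid M} {B : Set M} (f : M →+ ℤ) (hBS : B ⊆ S) (hf : ∀ u ∈ S, 0 ≤ f u)
    (hfB : ∀ b ∈ B, 0 < f b) (hdesc : ∀ u ∈ S, u ≠ 0 → ∃ b ∈ B, u - b ∈ S) :
    closure B = S := by
  refine le_antisymm (closure_le.2 hBS) fun u hu => ?_
  induction hN : (f u).toNat using Nat.strong_induction_on generalizing u with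
  | _ N ih =>
  obtain rfl | hu0 := eq_or_ne u 0
  · exact zero_mem _
  obtain ⟨b, hb, hub⟩ := hdesc u hu hu0
  have hlt : (f (u - b)).toNat < N := by
    have := hf _ hub
    have := hfB b hb
    rw [map_sub] at *
    omega
  simpa using add_mem (subset_closure hb) (ih _ hlt (u - b) hub rfl)

theorem hilbertBasis_subset_of_exists_sub_mem {n : ℕ} {S B : Set (Fin n → ℤ)} (hB : 0 ∉ B)
    (hBS : B ⊆ S) (hdesc : ∀ u ∈ S, u ≠ 0 → ∃ b ∈ B, u - b ∈ S) : hilbertBasis S ⊆ B := by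
  rintro u ⟨hu, hu0, hirr⟩
  obtain ⟨b, hb, hub⟩ := hdesc u hu hu0
  rcases hirr b (u - b) (hBS hb) hub (add_sub_cancel b u).symm with rfl | h
  · exact absurd hb hB
  · rwa [sub_eq_zero.1 h]

theorem fin3_eq_zero_iff {α : Type*} [Zero α] (u : Fin 3 → α) :
    u = 0 ↔ u 0 = 0 ∧ u 1 = 0 ∧ u 2 = 0 := by
  simp [funext_iff, Fin.forall_fin_succ]

def sigmaOneMonoid : AddSubmonoid (Fin 3 → ℤ) where
  carrier := {u | 0 ≤ u 1 ∧ 0 ≤ u 2 ∧ 3 * u 1 ≤ 4 * u 0 ∧ 3 * u 1 ≤ u 0 + 2 * u 2}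
  add_mem' := by
    simp only [Set.mem_ofPred_eq, Pi.add_apply]
    omega
  zero_mem' := by simp

@[simp]
theorem mem_sigmaOneMonoid {u : Fin 3 → ℤ} :
    u ∈ sigmaOneMonoid ↔ 0 ≤ u 1 ∧ 0 ≤ u 2 ∧ 3 * u 1 ≤ 4 * u 0 ∧ 3 * u 1 ≤ u 0 + 2 * u 2 :=
  Iff.rfl

theorem latticePoints_sigmaOne :
    latticePoints (coneOf ![![1, 0, 0], ![0, 0, 1], ![3, 1, 0], ![6, 8, 9]]) = sigmaOneMonoid := by
  ext u
  rw [latticePoints, Set.mem_ofPred_eq, toR_mem_coneOf_iff, SetLike.mem_coe, mem_sigmaOneMonoid]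
  simp only [Fin.forall_fin_succ, Fin.sum_univ_four, Fin.isValue, Fin.succ_zero_eq_one,
    Fin.succ_one_eq_two, Fin.reduceSucc, IsEmpty.forall_iff, and_true, Matrix.cons_val',
    Matrix.cons_val_fin_one, Matrix.cons_val_zero, Matrix.cons_val_one, Matrix.cons_val,
    Int.cast_one, Int.cast_zero, Int.cast_ofNat, mul_one, mul_zero, add_zero, zero_add]
  constructor
  · rintro ⟨c, ⟨hc0, hc1, hc2, hc3⟩, hx, hy, hz⟩
    refine ⟨?_, ?_, ?_, ?_⟩ <;> · rify; linarith
  · rintro ⟨hy, hz, hp, hq⟩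
    rify at hy hz hp hq
    -- σ₁ is the union of the simplicial cones ⟨e₁, e₃, (6,8,9)⟩ and ⟨e₁, (3,1,0), (6,8,9)⟩
    rcases le_total (9 * (u 1 : ℝ)) (8 * u 2) with h | h
    · refine ⟨![u 0 - 3 * u 1 / 4, u 2 - 9 * u 1 / 8, 0, u 1 / 8],
        ⟨?_, ?_, ?_, ?_⟩, ?_, ?_, ?_⟩ <;>
        simp only [Matrix.cons_val] <;> linarith
    · refine ⟨![u 0 - 3 * u 1 + 2 * u 2, 0, u 1 - 8 * u 2 / 9, u 2 / 9],
        ⟨?_, ?_, ?_, ?_⟩, ?_, ?_, ?_⟩ <;>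
        simp only [Matrix.cons_val] <;> linarith

theorem sub_mem_sigmaOneMonoid_iff {u : Fin 3 → ℤ} {x y z : ℤ} :
    u - ![x, y, z] ∈ sigmaOneMonoid ↔ 0 ≤ u 1 - y ∧ 0 ≤ u 2 - z ∧
      3 * (u 1 - y) ≤ 4 * (u 0 - x) ∧ 3 * (u 1 - y) ≤ u 0 - x + 2 * (u 2 - z) :=
  Iff.rfl

def sigmaOneBasis : Set (Fin 3 → ℤ) :=
  {![1, 0, 0], ![0, 0, 1], ![3, 1, 0], ![6, 8, 9], ![1, 1, 1], ![3, 4, 5]}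

theorem exists_sub_mem_sigmaOneMonoid {u : Fin 3 → ℤ} (hu : u ∈ sigmaOneMonoid) (hu0 : u ≠ 0) :
    ∃ b ∈ sigmaOneBasis, u - b ∈ sigmaOneMonoid := by
  rw [Ne, fin3_eq_zero_iff] at hu0
  rw [mem_sigmaOneMonoid] at hu
  obtain ⟨hy, hz, hp, hq⟩ := hu
  rcases (show u 1 = 0 ∨ 1 ≤ u 1 by omega) with hy0 | hy1
  · rcases (show u 0 = 0 ∨ 1 ≤ u 0 by omega) with hx0 | hx1
    · exact ⟨![0, 0, 1], by simp [sigmaOneBasis], sub_mem_sigmaOneMonoid_iff.2 (by omega)⟩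
    · exact ⟨![1, 0, 0], by simp [sigmaOneBasis], sub_mem_sigmaOneMonoid_iff.2 (by omega)⟩
  rcases (show u 2 = 0 ∨ 1 ≤ u 2 by omega) with hz0 | hz1
  · exact ⟨![3, 1, 0], by simp [sigmaOneBasis], sub_mem_sigmaOneMonoid_iff.2 (by omega)⟩
  rcases (show 3 * u 1 < 4 * u 0 ∨ 4 * u 0 = 3 * u 1 by omega) with hp1 | hp0
  · exact ⟨![1, 1, 1], by simp [sigmaOneBasis], sub_mem_sigmaOneMonoid_iff.2 (by omega)⟩
  -- on the facet `4x = 3y`, `u = (3t, 4t, z)` with `t ≥ 1`; if `x + 2z - 3y = 2z - 9t` is `0`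
  -- or `1`, parity forces `u ≥ (6,8,9)` or `u ≥ (3,4,5)` coordinatewise
  obtain ⟨t, hxt, hyt⟩ : ∃ t, u 0 = 3 * t ∧ u 1 = 4 * t := ⟨u 0 / 3, by omega, by omega⟩
  rcases (show 2 ≤ 2 * u 2 - 9 * t ∨ 2 * u 2 - 9 * t = 1 ∨ 2 * u 2 = 9 * t by omega)
    with hq2 | hq1 | hq0
  · exact ⟨![0, 0, 1], by simp [sigmaOneBasis], sub_mem_sigmaOneMonoid_iff.2 (by omega)⟩
  · exact ⟨![3, 4, 5], by simp [sigmaOneBasis], sub_mem_sigmaOneMonoid_iff.2 (by omega)⟩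
  · exact ⟨![6, 8, 9], by simp [sigmaOneBasis], sub_mem_sigmaOneMonoid_iff.2 (by omega)⟩

theorem sigmaOneBasis_subset_hilbertBasis :
    sigmaOneBasis ⊆ hilbertBasis (sigmaOneMonoid : Set (Fin 3 → ℤ)) := by
  intro b hb
  simp only [sigmaOneBasis, Set.mem_insert_iff, Set.mem_singleton_iff] at hb
  refine ⟨?_, ?_, fun a c ha hc hac => ?_⟩
  · rcases hb with rfl | rfl | rfl | rfl | rfl | rfl <;> simp
  · rcases hb with rfl | rfl | rfl | rfl | rfl | rfl <;> simp
  · rw [SetLike.mem_coe, mem_sigmaOneMonoid] at ha hc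
    rw [fin3_eq_zero_iff, fin3_eq_zero_iff]
    have h0 := congrFun hac 0
    have h1 := congrFun hac 1
    have h2 := congrFun hac 2
    rcases hb with rfl | rfl | rfl | rfl | rfl | rfl <;>
      simp only [Pi.add_apply, Matrix.cons_val_zero, Matrix.cons_val_one, Matrix.cons_val]
        at h0 h1 h2 <;>
      omega

theorem closure_sigmaOneBasis : AddSubmonoid.closure sigmaOneBasis = sigmaOneMonoid := by
  refine AddSubmonoid.closure_eq_of_exists_sub_mem
    (Pi.evalAddMonoidHom (fun _ => ℤ) 0 + Pi.evalAddMonoidHom (fun _ => ℤ) 2)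
    (fun b hb => (sigmaOneBasis_subset_hilbertBasis hb).1) ?_ ?_
    fun _ => exists_sub_mem_sigmaOneMonoid
  · rintro u ⟨hy, hz, hp, -⟩
    simp only [AddMonoidHom.add_apply, Pi.evalAddMonoidHom_apply]
    omega
  · intro b hb
    simp only [sigmaOneBasis, Set.mem_insert_iff, Set.mem_singleton_iff] at hb
    rcases hb with rfl | rfl | rfl | rfl | rfl | rfl <;> simp

/-- the Hilbert basis of the cone
`σ₁ = ⟨(1,0,0),(0,0,1),(3,1,0),(6,8,9)⟩` of the dual Newton polyhedron of
`y³ + xz² − x⁴ = 0` is exactly `{(1,0,0),(0,0,1),(3,1,0),(6,8,9),(1,1,1),(3,4,5)}`, and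
these six vectors generate the monoid `S_{σ₁} = σ₁ ∩ ℤ³`. -/
theorem elliptic_sigma1_hilbert_basis :
    let S := latticePoints (coneOf ![![1, 0, 0], ![0, 0, 1], ![3, 1, 0], ![6, 8, 9]])
    let B : Set (Fin 3 → ℤ) :=
      {![1, 0, 0], ![0, 0, 1], ![3, 1, 0], ![6, 8, 9], ![1, 1, 1], ![3, 4, 5]}
    hilbertBasis S = B ∧ (AddSubmonoid.closure B : Set (Fin 3 → ℤ)) = S := by
  intro S B
  have hS : S = sigmaOneMonoid := latticePoints_sigmaOne
  have hB : B = sigmaOneBasis := rfl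
  have hBS := sigmaOneBasis_subset_hilbertBasis
  rw [hS, hB, closure_sigmaOneBasis]
  refine ⟨le_antisymm ?_ hBS, rfl⟩
  exact hilbertBasis_subset_of_exists_sub_mem (fun h => (hBS h).2.1 rfl) (fun b hb => (hBS hb).1)
    fun _ => exists_sub_mem_sigmaOneMonoid
end
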